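/- arXiv:2512.00652 — 5 statements merged into one kernel-verified Lean document; each statement's English description precedes it below -/
import Mathlib

section
/- The only rational points on the affine curve y² + y = −2x⁶ + 9x² − 7 are (1, 0), (−1, 0), (1, −1), and (−1, −1). That is, for rational numbers x and y, the equation y² + y = −2x⁶ + 9x² − 7 holds if and only if (x, y) ∈ {(1, 0), (−1, 0), (1, −1), (−1, −1)}. -/
/-!
Completing the square turns the curve into `(2y + 1)² = -8x⁶ + 36x² - 27`. With `x = p / q`
in lowest terms this reads `m² = (3q² - 2p²)(4p⁴ + 6p²q² - 9q⁴)`. The 2- and 3-adic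
valuations of `m²` are even, which forces `q` odd and `3 ∤ p`; then the two factors are
coprime and positive, hence squares `a²` and `b²`. Eliminating `q` gives
`(4p² - a² - 2b)(4p² - a² + 2b) = 5a⁴` with coprime factors, so they are `d⁴` and `5e⁴`
with `a = de`. Now `12q² = (d² + e²)(d² + 5e²)`: the coprime halves of the two factors
multiply to `3q²` and the second half is `3 mod 4`, so `(d² + e²) / 2 = r²` and
`2p² = r⁴ + e⁴`. By Fermat's right triangle theorem (descent on `a⁴ - b⁴ = c²`) this
forces `r² = e²`, hence `d² = e² = 1` and `x = ±1`.
-/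

theorem sq_ne_prime_pow_mul {R : Type*} [CommMonoidWithZero R] [IsCancelMulZero R] {ℓ n : R}
    (hℓ : Prime ℓ) (hn : ¬ ℓ ∣ n) (m : R) (k : ℕ) : m ^ 2 ≠ ℓ ^ (2 * k + 1) * n := by
  intro h
  obtain ⟨m', rfl⟩ := hℓ.dvd_of_dvd_pow (n := 2)
    (h ▸ dvd_mul_of_dvd_left (dvd_pow_self ℓ (Nat.succ_ne_zero _)) n)
  induction k generalizing m' with
  | zero =>
    rw [mul_pow, sq ℓ, mul_assoc, Nat.mul_zero, zero_add, pow_one] at h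
    exact hn ⟨m' ^ 2, (mul_left_cancel₀ hℓ.ne_zero h).symm⟩
  | succ k ih =>
    rw [show 2 * (k + 1) + 1 = 2 + (2 * k + 1) by ring, pow_add, mul_pow, mul_assoc] at h
    have h' := mul_left_cancel₀ (pow_ne_zero 2 hℓ.ne_zero) h
    obtain ⟨m'', rfl⟩ := hℓ.dvd_of_dvd_pow (n := 2)
      (h' ▸ dvd_mul_of_dvd_left (dvd_pow_self ℓ (Nat.succ_ne_zero _)) n)
    exact ih m'' h'

theorem Int.exists_pow_eq_of_isCoprime_of_mul_eq_pow {a b c : ℤ} {n : ℕ} (hab : IsCoprime a b)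
    (h : a * b = c ^ n) (ha : 0 ≤ a) : ∃ r, 0 ≤ r ∧ a = r ^ n := by
  obtain ⟨d, hd⟩ := exists_associated_pow_of_mul_eq_pow' hab h
  refine ⟨|d|, abs_nonneg d, ?_⟩
  rw [Int.associated_iff_natAbs] at hd
  rw [← abs_of_nonneg ha, ← Int.natCast_natAbs, ← hd, Int.natCast_natAbs, abs_pow]

theorem Int.exists_sq_or_exists_sq_of_mul_eq_prime_mul_sq {k l ℓ q : ℤ} (hℓ : Prime ℓ)
    (hkl : IsCoprime k l) (hk : 0 ≤ k) (hl : 0 ≤ l) (h : k * l = ℓ * q ^ 2) :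
    (∃ r, k = r ^ 2) ∨ ∃ r, l = r ^ 2 := by
  wlog hℓk : ℓ ∣ k generalizing k l
  · have hℓl : ℓ ∣ l := (hℓ.dvd_mul.mp ⟨q ^ 2, h⟩).resolve_left hℓk
    exact (this hkl.symm hl hk (by rw [mul_comm, h]) hℓl).symm
  obtain ⟨k', rfl⟩ := hℓk
  have hk'l : k' * l = q ^ 2 := mul_left_cancel₀ hℓ.ne_zero (by rw [← h, mul_assoc])
  obtain ⟨r, -, hr⟩ := exists_pow_eq_of_isCoprime_of_mul_eq_pow
    (hkl.of_mul_left_right).symm (by rw [mul_comm, hk'l]) hl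
  exact Or.inr ⟨r, hr⟩

theorem Int.exists_eq_two_mul_sq_of_mul_eq_two_mul_sq {m n t : ℤ} (hmn : IsCoprime m n)
    (hm : Even m) (hm0 : 0 ≤ m) (hn0 : 0 ≤ n) (h : m * n = 2 * t ^ 2) :
    ∃ r s, m = 2 * r ^ 2 ∧ n = s ^ 2 ∧ IsCoprime r s := by
  obtain ⟨m', rfl⟩ := hm
  rw [← two_mul] at hmn hm0 h ⊢
  have hm' : m' * n = t ^ 2 := mul_left_cancel₀ two_ne_zero (by rw [← h, mul_assoc])
  obtain ⟨r, -, rfl⟩ := Int.exists_pow_eq_of_isCoprime_of_mul_eq_pow hmn.of_mul_left_right hm'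
    (nonneg_of_mul_nonneg_right hm0 two_pos)
  obtain ⟨s, -, rfl⟩ := Int.exists_pow_eq_of_isCoprime_of_mul_eq_pow hmn.of_mul_left_right.symm
    (by rw [mul_comm, hm']) hn0
  exact ⟨r, s, rfl, rfl, (IsCoprime.pow_iff two_pos two_pos).mp hmn.of_mul_left_right⟩

def FermatRightTriangle (a b c : ℤ) : Prop :=
  0 < a ∧ b ≠ 0 ∧ c ≠ 0 ∧ a ^ 4 = b ^ 4 + c ^ 2

namespace FermatRightTriangle

variable {a b c : ℤ}

theorem exists_lt_of_not_isCoprime (h : FermatRightTriangle a b c) (hab : ¬ IsCoprime a b) :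
    ∃ a' b' c', FermatRightTriangle a' b' c' ∧ a' < a := by
  obtain ⟨ha, hb, hc, heq⟩ := h
  set g : ℤ := (Int.gcd a b : ℤ)
  have hg : 2 ≤ g := by
    have h0 : Int.gcd a b ≠ 0 := Int.gcd_ne_zero_left ha.ne'
    have h1 : Int.gcd a b ≠ 1 := mt Int.isCoprime_iff_gcd_eq_one.mpr hab
    omega
  obtain ⟨a', ha'⟩ : g ∣ a := Int.gcd_dvd_left ..
  obtain ⟨b', hb'⟩ : g ∣ b := Int.gcd_dvd_right ..
  obtain ⟨c', hc'⟩ : g ^ 2 ∣ c := by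
    rw [← Int.pow_dvd_pow_iff two_ne_zero, ← pow_mul]
    exact ⟨a' ^ 4 - b' ^ 4, by rw [ha', hb'] at heq; linear_combination -heq⟩
  have ha'0 : 0 < a' := pos_of_mul_pos_right (ha'.symm ▸ ha) (by omega)
  refine ⟨a', b', c', ⟨ha'0, right_ne_zero_of_mul (hb'.symm ▸ hb),
    right_ne_zero_of_mul (hc'.symm ▸ hc), ?_⟩, by nlinarith⟩
  refine mul_left_cancel₀ (pow_ne_zero 4 (by omega : g ≠ 0)) ?_
  rw [ha', hb', hc'] at heq
  linear_combination heq

theorem isCoprime_right (h : FermatRightTriangle a b c) (hab : IsCoprime a b) :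
    IsCoprime b c := by
  rw [← IsCoprime.pow_right_iff two_pos,
    show c ^ 2 = a ^ 4 - b * b ^ 3 by linear_combination -h.2.2.2,
    IsCoprime.sub_mul_left_right_iff]
  exact hab.symm.pow_right

theorem exists_lt_of_odd (h : FermatRightTriangle a b c) (hab : IsCoprime a b) (hb : Odd b) :
    ∃ a' b' c', FermatRightTriangle a' b' c' ∧ a' < a := by
  have hbc := h.isCoprime_right hab
  obtain ⟨ha, hb0, hc, heq⟩ := h
  obtain ⟨m, n, hb2, hc2, ha2, -, -, hm⟩ := PythagoreanTriple.coprime_classification'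
    (x := b ^ 2) (y := c) (z := a ^ 2) (by unfold PythagoreanTriple; linear_combination -heq)
    (Int.isCoprime_iff_gcd_eq_one.mp hbc.pow_left)
    (Int.odd_iff.mp hb.pow) (by positivity)
  have hn : n ≠ 0 := by rintro rfl; simp [hc] at hc2
  have hm0 : 0 < m := hm.lt_of_ne' (by rintro rfl; nlinarith [pow_pos (pow_pos ha 2) 2])
  refine ⟨m, n, a * b, ⟨hm0, hn, mul_ne_zero ha.ne' hb0, ?_⟩, ?_⟩
  · linear_combination (-a ^ 2) * hb2 - (m ^ 2 - n ^ 2) * ha2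
  · have : 0 < n ^ 2 := by positivity
    exact lt_of_pow_lt_pow_left₀ 2 ha.le (by rw [ha2]; linarith)

theorem exists_lt_of_sq_eq_pow_four_add_four_mul_pow_four {r s : ℤ} (ha : 0 < a) (hs : Odd s)
    (hrs : IsCoprime r s) (hr : r ≠ 0) (h : a ^ 2 = s ^ 4 + 4 * r ^ 4) :
    ∃ u v, FermatRightTriangle u v s ∧ u < a := by
  obtain ⟨M, N, hs2, hr2, haMN, hMN, -, hM⟩ := PythagoreanTriple.coprime_classification'
    (x := s ^ 2) (y := 2 * r ^ 2) (z := a) (by unfold PythagoreanTriple; linear_combination -h)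
    (Int.isCoprime_iff_gcd_eq_one.mp ((Int.isCoprime_two_right.mpr hs).pow_left.mul_right
      hrs.symm.pow)) (Int.odd_iff.mp hs.pow) ha
  have hMN' : M * N = r ^ 2 := mul_left_cancel₀ two_ne_zero (by linear_combination -hr2)
  have hN : 0 < N := by
    rcases hM.lt_or_eq with hM | rfl
    · exact pos_of_mul_pos_right (hMN' ▸ by positivity) hM.le
    · simp only [zero_mul] at hMN'
      exact absurd hMN'.symm (pow_ne_zero 2 hr)
  obtain ⟨u, hu, rfl⟩ := Int.exists_pow_eq_of_isCoprime_of_mul_eq_pow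
    (Int.isCoprime_iff_gcd_eq_one.mpr hMN) hMN' hM
  obtain ⟨v, -, rfl⟩ := Int.exists_pow_eq_of_isCoprime_of_mul_eq_pow
    (Int.isCoprime_iff_gcd_eq_one.mpr hMN).symm (by rw [mul_comm, hMN']) hN.le
  have hv : v ≠ 0 := by rintro rfl; simp at hN
  have hu0 : 0 < u := hu.lt_of_ne' (by rintro rfl; simp at hMN'; exact pow_ne_zero 2 hr hMN'.symm)
  refine ⟨u, v, ⟨hu0, hv, fun h0 => by simp [h0] at hs, by linear_combination -hs2⟩, ?_⟩
  calc u ≤ u ^ 2 := Int.le_self_sq u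
    _ ≤ (u ^ 2) ^ 2 := Int.le_self_sq _
    _ < a := by rw [haMN]; linarith [pow_pos hN 2]

theorem exists_lt_of_even (h : FermatRightTriangle a b c) (hab : IsCoprime a b) (hb : Even b) :
    ∃ a' b' c', FermatRightTriangle a' b' c' ∧ a' < a := by
  have hbc := h.isCoprime_right hab
  obtain ⟨ha, hb0, hc, heq⟩ := h
  have hc2 : Odd c := Int.isCoprime_two_left.mp
    (hbc.of_isCoprime_of_dvd_left (even_iff_two_dvd.mp hb))
  obtain ⟨m, n, -, hb2, ha2, hmn, hpar, hm⟩ := PythagoreanTriple.coprime_classification'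
    (x := c) (y := b ^ 2) (z := a ^ 2) (by unfold PythagoreanTriple; linear_combination -heq)
    (Int.isCoprime_iff_gcd_eq_one.mp hbc.symm.pow_right) (Int.odd_iff.mp hc2) (by positivity)
  obtain ⟨t, rfl⟩ := hb
  have hmn' : m * n = 2 * t ^ 2 := mul_left_cancel₀ two_ne_zero (by linear_combination -hb2)
  have ht : t ≠ 0 := by rintro rfl; simp at hb0
  have hn : 0 < n := pos_of_mul_pos_right (hmn' ▸ by positivity) hm
  have hm0 : 0 < m := pos_of_mul_pos_left (hmn' ▸ by positivity) hn.le
  replace hmn : IsCoprime m n := Int.isCoprime_iff_gcd_eq_one.mpr hmn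
  obtain ⟨r, s, hs, hrs, hr, hsum⟩ :
      ∃ r s, Odd s ∧ IsCoprime r s ∧ r ≠ 0 ∧ a ^ 2 = s ^ 4 + 4 * r ^ 4 := by
    rcases hpar with ⟨hm2, hn2⟩ | ⟨hm2, hn2⟩
    · obtain ⟨r, s, rfl, rfl, hrs⟩ := Int.exists_eq_two_mul_sq_of_mul_eq_two_mul_sq hmn
        (Int.even_iff.mpr hm2) hm0.le hn.le hmn'
      exact ⟨r, s, (Int.odd_pow' two_ne_zero).mp (Int.odd_iff.mpr hn2), hrs,
        by rintro rfl; simp at hm0, by rw [ha2]; ring⟩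
    · obtain ⟨r, s, rfl, rfl, hrs⟩ := Int.exists_eq_two_mul_sq_of_mul_eq_two_mul_sq hmn.symm
        (Int.even_iff.mpr hn2) hn.le hm0.le (by rw [mul_comm, hmn'])
      exact ⟨r, s, (Int.odd_pow' two_ne_zero).mp (Int.odd_iff.mpr hm2), hrs,
        by rintro rfl; simp at hn, by rw [ha2]; ring⟩
  obtain ⟨u, v, huv, hua⟩ := exists_lt_of_sq_eq_pow_four_add_four_mul_pow_four ha hs hrs hr hsum
  exact ⟨u, v, s, huv, hua⟩

theorem exists_lt (h : FermatRightTriangle a b c) :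
    ∃ a' b' c', FermatRightTriangle a' b' c' ∧ a' < a := by
  by_cases hab : IsCoprime a b
  · rcases Int.even_or_odd b with hb | hb
    · exact h.exists_lt_of_even hab hb
    · exact h.exists_lt_of_odd hab hb
  · exact h.exists_lt_of_not_isCoprime hab

end FermatRightTriangle

theorem not_fermatRightTriangle (a b c : ℤ) : ¬ FermatRightTriangle a b c := by
  induction hn : a.toNat using Nat.strong_induction_on generalizing a b c with
  | _ n ih =>
    intro h
    obtain ⟨a', b', c', h', hlt⟩ := h.exists_lt
    exact ih a'.toNat (by have := h'.1; omega) a' b' c' rfl h'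

/-- If `x⁴ + y⁴ = 2z²`, then `z⁴ - (xy)⁴ = (z² - y⁴)²`. -/
theorem Int.sq_eq_sq_of_pow_four_add_pow_four_eq_two_mul_sq {x y z : ℤ} (hx : x ≠ 0)
    (hy : y ≠ 0) (h : x ^ 4 + y ^ 4 = 2 * z ^ 2) : x ^ 2 = y ^ 2 := by
  by_contra hxy
  have hz : z ≠ 0 := by
    rintro rfl
    have : 0 < x ^ 4 := by positivity
    linarith [pow_nonneg (sq_nonneg y) 2]
  refine not_fermatRightTriangle |z| (x * y) (z ^ 2 - y ^ 4)
    ⟨abs_pos.mpr hz, mul_ne_zero hx hy, fun h0 => hxy ?_, ?_⟩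
  · exact (pow_left_inj₀ (sq_nonneg x) (sq_nonneg y) two_ne_zero).mp
      (by linear_combination h + 2 * h0)
  · rw [pow_abs, abs_of_nonneg (by positivity)]
    linear_combination -y ^ 4 * h

theorem Int.prime_five : Prime (5 : ℤ) := Int.prime_iff_natAbs_prime.mpr (by norm_num)

theorem Int.sq_add_five_mul_sq_ne_two_mul_sq {d e : ℤ} (hd : Odd d) (he : Odd e) (w : ℤ) :
    d ^ 2 + 5 * e ^ 2 ≠ 2 * w ^ 2 := by
  obtain ⟨i, rfl⟩ := hd
  obtain ⟨j, rfl⟩ := he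
  have key : ∀ I J W : ZMod 8, (2 * I + 1) ^ 2 + 5 * (2 * J + 1) ^ 2 ≠ 2 * W ^ 2 := by decide
  exact fun h => key i j w (by exact_mod_cast congrArg (Int.cast : ℤ → ZMod 8) h)

theorem Int.isCoprime_of_mul_eq_five_mul_pow_four {s t a p : ℤ} (hs : Odd s) (hap : IsCoprime a p)
    (hst : s * t = 5 * a ^ 4) (hsum : s + t = 8 * p ^ 2 - 2 * a ^ 2) : IsCoprime s t := by
  refine isCoprime_of_prime_dvd (fun h0 => by simp [h0.1] at hs) fun ℓ hℓ hℓs hℓt => ?_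
  have hℓa : ℓ ∣ a := by
    rcases hℓ.dvd_mul.mp (hst ▸ hℓs.mul_right t) with h5 | ha4
    · rw [(hℓ.associated_of_dvd Int.prime_five h5).dvd_iff_dvd_left] at hℓs hℓt ⊢
      obtain ⟨s', rfl⟩ := hℓs
      obtain ⟨t', rfl⟩ := hℓt
      exact Int.prime_five.dvd_of_dvd_pow (n := 4)
        ⟨s' * t', mul_left_cancel₀ Int.prime_five.ne_zero (by linear_combination -hst)⟩
    · exact hℓ.dvd_of_dvd_pow ha4
  have hℓp : ℓ ∣ p := by
    have h8 : ℓ ∣ 2 ^ 3 * p ^ 2 := by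
      rw [show 2 ^ 3 * p ^ 2 = s + t + 2 * a * a by linear_combination -hsum]
      exact dvd_add (dvd_add hℓs hℓt) (hℓa.mul_left _)
    have hℓ2 : IsCoprime ℓ (2 ^ 3) :=
      ((Int.isCoprime_two_right.mpr hs).of_isCoprime_of_dvd_left hℓs).pow_right
    exact hℓ.dvd_of_dvd_pow (hℓ2.dvd_of_dvd_mul_left h8)
  exact hℓ.not_isUnit (hap.isUnit_of_dvd' hℓa hℓp)

theorem Int.exists_pow_four_of_mul_eq_five_mul_pow_four {s t a : ℤ} (hst : IsCoprime s t)
    (hs : 0 ≤ s) (ht : 0 ≤ t) (h : s * t = 5 * a ^ 4) :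
    ∃ d e, IsCoprime d e ∧ a ^ 2 = d ^ 2 * e ^ 2 ∧ s + t = d ^ 4 + 5 * e ^ 4 := by
  wlog h5 : 5 ∣ t generalizing s t
  · have h5s : 5 ∣ s := (Int.prime_five.dvd_mul.mp ⟨a ^ 4, h⟩).resolve_right h5
    obtain ⟨d, e, hde, ha, hsum⟩ := this hst.symm ht hs (by rw [mul_comm, h]) h5s
    exact ⟨d, e, hde, ha, by rw [add_comm, hsum]⟩
  obtain ⟨t', rfl⟩ := h5
  have h' : s * t' = a ^ 4 := mul_left_cancel₀ Int.prime_five.ne_zero (by linear_combination h)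
  have hst' : IsCoprime s t' := hst.of_mul_right_right
  obtain ⟨d, -, rfl⟩ := Int.exists_pow_eq_of_isCoprime_of_mul_eq_pow hst' h' hs
  obtain ⟨e, -, rfl⟩ := Int.exists_pow_eq_of_isCoprime_of_mul_eq_pow hst'.symm
    (by rw [mul_comm, h']) (nonneg_of_mul_nonneg_right ht (by norm_num : (0 : ℤ) < 5))
  refine ⟨d, e, (IsCoprime.pow_iff four_pos four_pos).mp hst', ?_, rfl⟩
  exact (pow_left_inj₀ (sq_nonneg a) (by positivity) two_ne_zero).mp (by linear_combination -h')

theorem Int.isCoprime_of_sq_add_sq_eq_two_mul {d e k l : ℤ} (hde : IsCoprime d e) (hd : Odd d)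
    (he : Odd e) (hk : d ^ 2 + e ^ 2 = 2 * k) (hl : d ^ 2 + 5 * e ^ 2 = 2 * l) : IsCoprime k l := by
  have hk2 : Odd k := by
    have := Int.sq_mod_four_eq_one_of_odd hd
    have := Int.sq_mod_four_eq_one_of_odd he
    rw [Int.odd_iff]
    omega
  have hke : IsCoprime k e := by
    refine IsCoprime.of_mul_left_right (x := 2) ?_
    rw [← hk, sq e, IsCoprime.add_mul_left_left_iff]
    exact hde.pow_left
  rw [show l = 2 * e ^ 2 + k * 1 by linarith, IsCoprime.add_mul_left_right_iff]
  exact (Int.isCoprime_two_right.mpr hk2).mul_right hke.pow_right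

theorem Int.odd_of_sq_add_two_mul_sq_eq_three_mul_sq {a p q : ℤ} (hq : Odd q)
    (h : a ^ 2 + 2 * p ^ 2 = 3 * q ^ 2) : Odd a := by
  refine (Int.odd_pow' two_ne_zero).mp ?_
  rw [show a ^ 2 = 3 * q ^ 2 - 2 * p ^ 2 by linarith]
  exact ((by decide : Odd (3 : ℤ)).mul hq.pow).sub_even (even_two_mul _)

section Sextic

variable {p q m : ℤ}

theorem odd_of_sq_eq_sextic (hpq : IsCoprime p q)
    (h : m ^ 2 = -8 * p ^ 6 + 36 * p ^ 2 * q ^ 4 - 27 * q ^ 6) : Odd q := by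
  refine Int.not_even_iff_odd.mp fun ⟨q', hq'⟩ => ?_
  subst hq'
  have hp : Odd p :=
    Int.isCoprime_two_right.mp (hpq.of_isCoprime_of_dvd_right ⟨q', (two_mul q').symm⟩)
  refine sq_ne_prime_pow_mul Int.prime_two (n := -p ^ 6 + 2 * (36 * p ^ 2 * q' ^ 4 - 108 * q' ^ 6))
    ?_ m 1 (by linear_combination h)
  rw [← even_iff_two_dvd, Int.not_even_iff_odd]
  exact hp.pow.neg.add_even (even_two_mul _)

theorem not_three_dvd_of_sq_eq_sextic (hpq : IsCoprime p q)
    (h : m ^ 2 = -8 * p ^ 6 + 36 * p ^ 2 * q ^ 4 - 27 * q ^ 6) : ¬ 3 ∣ p := by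
  rintro ⟨p', rfl⟩
  have hq : ¬ 3 ∣ q := fun hq =>
    Int.prime_three.not_isUnit (hpq.isUnit_of_dvd' (dvd_mul_right 3 p') hq)
  refine sq_ne_prime_pow_mul Int.prime_three (n := -q ^ 6 + 3 * (4 * p' ^ 2 * q ^ 4 - 72 * p' ^ 6))
    ?_ m 1 (by linear_combination h)
  rw [dvd_add_left (dvd_mul_right 3 _), dvd_neg]
  exact fun h3 => hq (Int.prime_three.dvd_of_dvd_pow h3)

theorem exists_sq_of_sq_eq_sextic (hpq : IsCoprime p q) (hq : Odd q) (hp : ¬ 3 ∣ p)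
    (h : m ^ 2 = -8 * p ^ 6 + 36 * p ^ 2 * q ^ 4 - 27 * q ^ 6) :
    ∃ a b, a ^ 2 + 2 * p ^ 2 = 3 * q ^ 2 ∧ b ^ 2 = 4 * p ^ 4 - 2 * p ^ 2 * a ^ 2 - a ^ 4 := by
  have h3A : IsCoprime 3 (3 * q ^ 2 - 2 * p ^ 2) := by
    rw [IsCoprime.mul_sub_left_right_iff]
    exact (show IsCoprime (3 : ℤ) 2 from ⟨1, -1, by norm_num⟩).mul_right
      (Int.prime_three.coprime_iff_not_dvd.mpr hp).pow_right
  have hqA : IsCoprime q (3 * q ^ 2 - 2 * p ^ 2) := by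
    rw [show 3 * q ^ 2 - 2 * p ^ 2 = q * (3 * q) - 2 * p ^ 2 by ring,
      IsCoprime.mul_sub_left_right_iff]
    exact (Int.isCoprime_two_right.mpr hq).mul_right hpq.symm.pow_right
  have hAB : IsCoprime (3 * q ^ 2 - 2 * p ^ 2) (4 * p ^ 4 + 6 * p ^ 2 * q ^ 2 - 9 * q ^ 4) := by
    rw [show 4 * p ^ 4 + 6 * p ^ 2 * q ^ 2 - 9 * q ^ 4
        = 3 ^ 2 * q ^ 4 - (3 * q ^ 2 - 2 * p ^ 2) * (2 * (p ^ 2 + 3 * q ^ 2)) by ring,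
      IsCoprime.sub_mul_left_right_iff]
    exact h3A.symm.pow_right.mul_right hqA.symm.pow_right
  have hmAB : (3 * q ^ 2 - 2 * p ^ 2) * (4 * p ^ 4 + 6 * p ^ 2 * q ^ 2 - 9 * q ^ 4) = m ^ 2 := by
    rw [h]; ring
  have hA0 : 3 * q ^ 2 - 2 * p ^ 2 ≠ 0 := fun h0 => by
    rw [h0, isCoprime_zero_right, Int.isUnit_iff] at h3A
    norm_num at h3A
  have hA : 0 < 3 * q ^ 2 - 2 * p ^ 2 := by
    refine hA0.lt_or_gt.resolve_left fun hA => ?_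
    have hB : 0 < 4 * p ^ 4 + 6 * p ^ 2 * q ^ 2 - 9 * q ^ 4 := by nlinarith [sq_nonneg q]
    nlinarith [sq_nonneg m]
  obtain ⟨a, -, ha⟩ := Int.exists_pow_eq_of_isCoprime_of_mul_eq_pow hAB hmAB hA.le
  obtain ⟨b, -, hb⟩ := Int.exists_pow_eq_of_isCoprime_of_mul_eq_pow hAB.symm
    (by rw [mul_comm, hmAB]) (nonneg_of_mul_nonneg_right (hmAB ▸ sq_nonneg m) hA)
  exact ⟨a, b, by linarith, by linear_combination -hb - (a ^ 2 + 3 * q ^ 2) * ha⟩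

theorem exists_pow_four_add_five_mul_pow_four {a b : ℤ} (hpq : IsCoprime p q) (hq : Odd q)
    (hp : ¬ 3 ∣ p) (ha : a ^ 2 + 2 * p ^ 2 = 3 * q ^ 2)
    (hb : b ^ 2 = 4 * p ^ 4 - 2 * p ^ 2 * a ^ 2 - a ^ 4) :
    ∃ d e, IsCoprime d e ∧ a ^ 2 = d ^ 2 * e ^ 2 ∧
      2 * (4 * p ^ 2 - a ^ 2) = d ^ 4 + 5 * e ^ 4 := by
  have ha2 : Odd a := Int.odd_of_sq_add_two_mul_sq_eq_three_mul_sq hq ha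
  have hap : IsCoprime a p := by
    rw [← IsCoprime.pow_left_iff two_pos,
      show a ^ 2 = 3 * q ^ 2 - 2 * p * p by linear_combination ha, IsCoprime.sub_mul_right_left_iff]
    exact (Int.prime_three.coprime_iff_not_dvd.mpr hp).mul_left hpq.symm.pow_left
  have ha4 : 0 < a ^ 4 := by
    have : a ≠ 0 := by rintro rfl; simp at ha2
    positivity
  have hU : 0 < 4 * p ^ 2 - a ^ 2 := by
    by_contra! hU
    nlinarith [sq_nonneg b, mul_nonneg (sq_nonneg p) (sub_nonneg.mpr hU)]
  have hst : (4 * p ^ 2 - a ^ 2 - 2 * b) * (4 * p ^ 2 - a ^ 2 + 2 * b) = 5 * a ^ 4 := by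
    linear_combination -4 * hb
  have hs : Odd (4 * p ^ 2 - a ^ 2 - 2 * b) := by
    rw [show 4 * p ^ 2 - a ^ 2 - 2 * b = 2 * (2 * p ^ 2 - b) - a ^ 2 by ring]
    exact (even_two_mul _).sub_odd ha2.pow
  obtain ⟨hs0, ht0⟩ : 0 < 4 * p ^ 2 - a ^ 2 - 2 * b ∧ 0 < 4 * p ^ 2 - a ^ 2 + 2 * b := by
    have hst0 : 0 < (4 * p ^ 2 - a ^ 2 - 2 * b) * (4 * p ^ 2 - a ^ 2 + 2 * b) := by
      rw [hst]; positivity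
    rcases pos_and_pos_or_neg_and_neg_of_mul_pos hst0 with h | ⟨h1, h2⟩
    · exact h
    · linarith
  obtain ⟨d, e, hde, had, hsum⟩ := Int.exists_pow_four_of_mul_eq_five_mul_pow_four
    (Int.isCoprime_of_mul_eq_five_mul_pow_four hs hap hst (by ring)) hs0.le ht0.le hst
  exact ⟨d, e, hde, had, by linear_combination hsum⟩

theorem sq_eq_one_of_eight_mul_sq_eq_of_twelve_mul_sq_eq {d e : ℤ} (hde : IsCoprime d e)
    (hd : Odd d) (he : Odd e)
    (hp : 8 * p ^ 2 = (d ^ 2 + e ^ 2) ^ 2 + 4 * e ^ 4)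
    (hq : 12 * q ^ 2 = (d ^ 2 + e ^ 2) * (d ^ 2 + 5 * e ^ 2)) : d ^ 2 = 1 ∧ e ^ 2 = 1 := by
  obtain ⟨k, hk⟩ : Even (d ^ 2 + e ^ 2) := hd.pow.add_odd he.pow
  obtain ⟨l, hl⟩ : Even (d ^ 2 + 5 * e ^ 2) :=
    hd.pow.add_odd ((by decide : Odd (5 : ℤ)).mul he.pow)
  rw [← two_mul] at hk hl
  have hkl : k * l = 3 * q ^ 2 :=
    mul_left_cancel₀ (by norm_num : (4 : ℤ) ≠ 0)
      (by linear_combination -hq - (d ^ 2 + 5 * e ^ 2) * hk - 2 * k * hl)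
  rcases Int.exists_sq_or_exists_sq_of_mul_eq_prime_mul_sq Int.prime_three
    (Int.isCoprime_of_sq_add_sq_eq_two_mul hde hd he hk hl) (by nlinarith) (by nlinarith) hkl
    with ⟨r, rfl⟩ | ⟨w, rfl⟩
  · have hr : r ≠ 0 := by
      rintro rfl
      have : d ≠ 0 := by rintro rfl; simp at hd
      have : 0 < d ^ 2 := by positivity
      nlinarith
    have he0 : e ≠ 0 := by rintro rfl; simp at he
    have hre : r ^ 2 = e ^ 2 := Int.sq_eq_sq_of_pow_four_add_pow_four_eq_two_mul_sq (z := p) hr he0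
      (mul_left_cancel₀ (by norm_num : (4 : ℤ) ≠ 0)
        (by linear_combination -hp - (d ^ 2 + e ^ 2 + 2 * r ^ 2) * hk))
    have hde2 : d ^ 2 = e ^ 2 := by linarith
    have he1 : e ^ 2 = 1 := by
      have h := hde.pow (m := 2) (n := 2)
      rw [hde2, isCoprime_self, Int.isUnit_iff] at h
      exact h.resolve_right (by nlinarith [sq_nonneg e])
    exact ⟨hde2.trans he1, he1⟩
  · exact absurd hl (Int.sq_add_five_mul_sq_ne_two_mul_sq hd he w)

theorem Int.sq_eq_one_of_sq_eq_sextic (hpq : IsCoprime p q)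
    (h : m ^ 2 = -8 * p ^ 6 + 36 * p ^ 2 * q ^ 4 - 27 * q ^ 6) : p ^ 2 = 1 ∧ q ^ 2 = 1 := by
  have hq := odd_of_sq_eq_sextic hpq h
  have hp := not_three_dvd_of_sq_eq_sextic hpq h
  obtain ⟨a, b, ha, hb⟩ := exists_sq_of_sq_eq_sextic hpq hq hp h
  obtain ⟨d, e, hde, had, hU⟩ := exists_pow_four_add_five_mul_pow_four hpq hq hp ha hb
  obtain ⟨hd, he⟩ : Odd d ∧ Odd e := by
    rw [← Int.odd_mul, ← Int.odd_pow' two_ne_zero, mul_pow, ← had]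
    exact (Int.odd_of_sq_add_two_mul_sq_eq_three_mul_sq hq ha).pow
  obtain ⟨hd1, he1⟩ :=
    sq_eq_one_of_eight_mul_sq_eq_of_twelve_mul_sq_eq (p := p) (q := q) hde hd he
    (by linear_combination hU + 2 * had) (by linear_combination -4 * ha + hU + 6 * had)
  have ha1 : a ^ 2 = 1 := by rw [had, hd1, he1, one_mul]
  constructor <;> nlinarith

end Sextic

theorem Rat.exists_eq_intCast_of_sq_eq_intCast {w : ℚ} {n : ℤ} (h : w ^ 2 = n) :
    ∃ m : ℤ, w = m := by
  have hden : w.den ^ 2 = 1 := by rw [← Rat.den_pow, h, Rat.den_intCast]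
  exact ⟨w.num, (Rat.coe_int_num_of_den_eq_one (by simpa using hden)).symm⟩

theorem Rat.sq_eq_one_of_sq_eq_sextic {x w : ℚ} (h : w ^ 2 = -8 * x ^ 6 + 36 * x ^ 2 - 27) :
    x ^ 2 = 1 := by
  obtain ⟨p, q, hpq, hq0, rfl⟩ :
      ∃ p q : ℤ, IsCoprime p q ∧ (q : ℚ) ≠ 0 ∧ x = p / q :=
    ⟨x.num, x.den, Rat.isCoprime_num_den x, by exact_mod_cast x.den_nz,
      by push_cast; exact (Rat.num_div_den x).symm⟩
  have hN : (w * q ^ 3) ^ 2 = ((-8 * p ^ 6 + 36 * p ^ 2 * q ^ 4 - 27 * q ^ 6 : ℤ) : ℚ) := by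
    rw [mul_pow, h]
    field_simp
    push_cast
    ring
  obtain ⟨m, hm⟩ := Rat.exists_eq_intCast_of_sq_eq_intCast hN
  obtain ⟨hp, hq⟩ := Int.sq_eq_one_of_sq_eq_sextic (m := m) hpq (by exact_mod_cast hm ▸ hN)
  rw [div_pow, ← Int.cast_pow, ← Int.cast_pow, hp, hq, Int.cast_one, div_one]

/-- The only rational points on the affine curve `y² + y = -2x⁶ + 9x² - 7` are
`(1, 0)`, `(-1, 0)`, `(1, -1)`, and `(-1, -1)`. -/
theorem rational_points_of_genus_two_curve_one (x y : ℚ) :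
    y ^ 2 + y = -2 * x ^ 6 + 9 * x ^ 2 - 7 ↔
      (x, y) = (1, 0) ∨ (x, y) = (-1, 0) ∨ (x, y) = (1, -1) ∨ (x, y) = (-1, -1) := by
  constructor
  · intro h
    have hx : x ^ 2 = 1 :=
      Rat.sq_eq_one_of_sq_eq_sextic (w := 2 * y + 1) (by linear_combination 4 * h)
    have hy : y * (y + 1) = 0 := by linear_combination h + (7 - 2 * x ^ 4 - 2 * x ^ 2) * hx
    obtain rfl | rfl := sq_eq_one_iff.mp hx <;>
      obtain rfl | rfl := (mul_eq_zero.mp hy).imp_right eq_neg_of_add_eq_zero_left <;> simp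
  · rintro (h | h | h | h) <;> obtain ⟨rfl, rfl⟩ := Prod.mk.inj h <;> norm_num
end

section
/- The only rational points on the affine curve y² = 2x⁶ + 2 are (1, 2), (1, −2), (−1, 2), and (−1, −2). That is, for rational numbers x and y, the equation y² = 2x⁶ + 2 holds if and only if x ∈ {1, −1} and y ∈ {2, −2}. -/
/-!
Writing `x = a / b` in lowest terms, `y b³` is a rational whose square is the integer
`2 (a⁶ + b⁶)`, hence an even integer `2d`. Then `a, b` are odd and
`d² = k (a⁴ - a²b² + b⁴)` with `k = (a² + b²) / 2` coprime to the second factor, so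
`a⁴ - a²b² + b⁴` is a square. By infinite descent, `x⁴ - x²y² + y⁴ = w²` has no coprime
solutions besides those with `xy = 0` or `x² = y²`; hence `a² = b²`, that is `x = ±1`.

The descent: if `x, y` are odd, `(xy, x² - y², w)` is a primitive Pythagorean triple whose
parameters `(m, n)` give a solution with `w' = (x² + y²) / 2`. If `y = 2c`, the halves of
`w ± (x² - 2c²)` are coprime with product `3c⁴`, so they are `3u⁴` and `v⁴` (the other
order is impossible mod 4) and `x² = (v² - u²)(v² + 3u²)`. Both factors are then squares `g²`,
`h²`, and the parameters of the Pythagorean triple `(g, 2u, h)` give a solution with `w' = v`.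
-/

namespace Int

theorem ne_zero_of_odd {n : ℤ} (h : Odd n) : n ≠ 0 := by
  rintro rfl; exact not_odd_zero h

theorem exists_pow_eq_of_isCoprime_of_nonneg {a b c : ℤ} {k : ℕ} (hab : IsCoprime a b)
    (h : a * b = c ^ k) (ha : 0 ≤ a) : ∃ d, 0 ≤ d ∧ a = d ^ k := by
  obtain ⟨d, hd⟩ := exists_eq_pow_of_mul_eq_pow (a := a.natAbs) (b := b.natAbs)
    (Nat.isUnit_iff.mpr (isCoprime_iff_gcd_eq_one.mp hab))
    (by rw [← natAbs_mul, h, natAbs_pow])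
  exact ⟨d, by positivity, by rw [← natAbs_of_nonneg ha, hd]; push_cast; rfl⟩

theorem isCoprime_three_sq_add_sq {a b : ℤ} (hab : IsCoprime a b) :
    IsCoprime 3 (a ^ 2 + b ^ 2) := by
  refine prime_three.coprime_iff_not_dvd.mpr fun h3 => prime_three.not_isUnit ?_
  have key : ∀ a b : ZMod 3, a ^ 2 + b ^ 2 = 0 → a = 0 ∧ b = 0 := by decide
  have h3' := (ZMod.intCast_zmod_eq_zero_iff_dvd (a ^ 2 + b ^ 2) 3).mpr h3
  push_cast at h3'
  obtain ⟨ha, hb⟩ := key _ _ h3'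
  exact hab.isUnit_of_dvd' ((ZMod.intCast_zmod_eq_zero_iff_dvd a 3).mp ha)
    ((ZMod.intCast_zmod_eq_zero_iff_dvd b 3).mp hb)

theorem sq_ne_sq_add_sq_mul_three_mul_sq_sub_sq {x u v : ℤ} (hx : Odd x) :
    x ^ 2 ≠ (u ^ 2 + v ^ 2) * (3 * u ^ 2 - v ^ 2) := by
  obtain ⟨r, rfl⟩ := hx
  intro h
  have key : ∀ r u v : ZMod 4, (2 * r + 1) ^ 2 ≠ (u ^ 2 + v ^ 2) * (3 * u ^ 2 - v ^ 2) := by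
    decide
  exact key r u v (by exact_mod_cast congrArg (Int.cast : ℤ → ZMod 4) h)

end Int

theorem IsCoprime.of_add_sub {R : Type*} [CommRing R] {a b : R}
    (h : IsCoprime (a + b) (a - b)) : IsCoprime a b := by
  obtain ⟨u, v, huv⟩ := h
  exact ⟨u + v, u - v, by linear_combination huv⟩

structure IsNontrivialQuarticSolution (x y w : ℤ) : Prop where
  isCoprime : IsCoprime x y
  mul_ne_zero : x * y ≠ 0
  sq_ne_sq : x ^ 2 ≠ y ^ 2
  eq : x ^ 4 - x ^ 2 * y ^ 2 + y ^ 4 = w ^ 2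

theorem isCoprime_twelve_mul_pow_four_sq_sub_two_mul_sq {x c : ℤ} (hxc : IsCoprime x c)
    (hx : Odd x) : IsCoprime (12 * c ^ 4) (x ^ 2 - 2 * c ^ 2) := by
  have h4 : IsCoprime (2 ^ 2) (x ^ 2 - 2 * c ^ 2) :=
    (Int.isCoprime_two_left.mpr (hx.pow.sub_even ⟨c ^ 2, by ring⟩)).pow_left
  have h3 : IsCoprime 3 (x ^ 2 - 2 * c ^ 2) := by
    rw [show x ^ 2 - 2 * c ^ 2 = x ^ 2 + c ^ 2 + 3 * -c ^ 2 by ring]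
    exact (Int.isCoprime_three_sq_add_sq hxc).add_mul_left_right _
  have hc : IsCoprime (c ^ 4) (x ^ 2 - 2 * c ^ 2) := by
    rw [show x ^ 2 - 2 * c ^ 2 = x ^ 2 + c * (-2 * c) by ring]
    exact (hxc.symm.pow_right.add_mul_left_right _).pow_left
  rw [show (12 : ℤ) * c ^ 4 = 2 ^ 2 * 3 * c ^ 4 by norm_num]
  exact (h4.mul_left h3).mul_left hc

theorem exists_eq_three_mul_pow_four {α β c : ℤ} (hαβ : IsCoprime α β)
    (h : α * β = 3 * c ^ 4) (h3 : 3 ∣ α) (hα : 0 ≤ α) (hβ : 0 ≤ β) :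
    ∃ u v, IsCoprime u v ∧ c ^ 2 = u ^ 2 * v ^ 2 ∧ α = 3 * u ^ 4 ∧ β = v ^ 4 := by
  obtain ⟨α', rfl⟩ := h3
  have h' : α' * β = c ^ 4 := mul_left_cancel₀ three_ne_zero (by linear_combination h)
  obtain ⟨u, -, rfl⟩ := Int.exists_pow_eq_of_isCoprime_of_nonneg hαβ.of_mul_left_right h'
    (by linarith)
  obtain ⟨v, -, rfl⟩ := Int.exists_pow_eq_of_isCoprime_of_nonneg hαβ.symm.of_mul_right_right
    (by rw [mul_comm, h']) hβ
  refine ⟨u, v, (IsCoprime.pow_iff four_pos four_pos).mp hαβ.of_mul_left_right, ?_, rfl, rfl⟩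
  exact (pow_left_inj₀ (by positivity) (by positivity) two_ne_zero).mp
    (by linear_combination h'.symm)

theorem exists_sq_eq_sq_sub_sq_mul_sq_add_three_mul_sq {x c w : ℤ} (hxc : IsCoprime x c)
    (hx : Odd x) (hc : c ≠ 0) (h : x ^ 4 - x ^ 2 * (2 * c) ^ 2 + (2 * c) ^ 4 = w ^ 2) :
    ∃ u v, IsCoprime u v ∧ u ≠ 0 ∧ x ^ 2 = (v ^ 2 - u ^ 2) * (v ^ 2 + 3 * u ^ 2) ∧
      |w| = 3 * u ^ 4 + v ^ 4 := by
  set s := x ^ 2 - 2 * c ^ 2 with hs_def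
  have hs : Odd s := hx.pow.sub_even ⟨c ^ 2, by ring⟩
  have hws : |w| ^ 2 = 12 * c ^ 4 + s * s := by rw [sq_abs, ← h]; ring
  have hw : Odd |w| := by
    rw [← Int.odd_pow' two_ne_zero, hws]
    exact Even.add_odd ⟨6 * c ^ 4, by ring⟩ (hs.mul hs)
  obtain ⟨β, hβ⟩ := hw.add_odd hs
  set α := |w| - β
  have hαβ : α * β = 3 * c ^ 4 :=
    mul_left_cancel₀ four_ne_zero (by linear_combination hws + (s + 2 * β - |w|) * hβ)
  have hcop : IsCoprime α β := by
    have hws' : IsCoprime (|w| ^ 2) s :=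
      hws ▸ (isCoprime_twelve_mul_pow_four_sq_sub_two_mul_sq hxc hx).add_mul_left_left s
    have : IsCoprime (β + α) (β - α) := by
      rwa [show β + α = |w| by ring, show β - α = s by linarith,
        ← IsCoprime.pow_left_iff two_pos]
    exact this.of_add_sub.symm
  have hpos : 0 < α * β := by rw [hαβ]; positivity
  have hα₀ : 0 < α := by nlinarith [abs_nonneg w]
  have hβ₀ : 0 < β := pos_of_mul_pos_right hpos hα₀.le
  rcases Int.prime_three.dvd_or_dvd ⟨c ^ 4, hαβ⟩ with h3 | h3
  · obtain ⟨u, v, huv, hc2, hu, hv⟩ :=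
      exists_eq_three_mul_pow_four hcop hαβ h3 hα₀.le hβ₀.le
    refine ⟨u, v, huv, ?_, ?_, ?_⟩
    · rintro rfl; exact hc (by simpa using hc2)
    · linear_combination hv - hu + 2 * hc2 + hβ - hs_def
    · linear_combination hu + hv
  · obtain ⟨u, v, -, hc2, hu, hv⟩ :=
      exists_eq_three_mul_pow_four hcop.symm (by rw [mul_comm, hαβ]) h3 hβ₀.le hα₀.le
    exact absurd (by linear_combination hu - hv + 2 * hc2 + hβ - hs_def)
      (Int.sq_ne_sq_add_sq_mul_three_mul_sq_sub_sq (u := u) (v := v) hx)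

theorem exists_isNontrivialQuarticSolution_of_sq_eq_mul {x u v : ℤ} (hx : Odd x)
    (huv : IsCoprime u v) (hu : u ≠ 0) (h : x ^ 2 = (v ^ 2 - u ^ 2) * (v ^ 2 + 3 * u ^ 2)) :
    ∃ m n, IsNontrivialQuarticSolution m n v := by
  obtain ⟨hodd, -⟩ := Int.odd_mul.mp (h ▸ hx.pow)
  have hu' : IsCoprime (v ^ 2 - u ^ 2) u := by
    rw [show v ^ 2 - u ^ 2 = v ^ 2 + -u * u by ring]
    exact huv.symm.pow_left.add_mul_right_left _
  have hcop : IsCoprime (v ^ 2 - u ^ 2) (v ^ 2 + 3 * u ^ 2) := by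
    rw [show v ^ 2 + 3 * u ^ 2 = 2 ^ 2 * u ^ 2 + (v ^ 2 - u ^ 2) * 1 by ring]
    exact ((Int.isCoprime_two_right.mpr hodd).pow_right.mul_right hu'.pow_right).add_mul_left_right
      1
  have hA : 0 < v ^ 2 + 3 * u ^ 2 := by positivity
  have hB : 0 < v ^ 2 - u ^ 2 :=
    pos_of_mul_pos_left (h ▸ sq_pos_of_ne_zero (Int.ne_zero_of_odd hx)) hA.le
  obtain ⟨g, -, hg⟩ := Int.exists_pow_eq_of_isCoprime_of_nonneg hcop h.symm hB.le
  obtain ⟨k, hk, hk'⟩ := Int.exists_pow_eq_of_isCoprime_of_nonneg hcop.symm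
    (by rw [mul_comm, h]) hA.le
  have hg_odd : Odd g := (Int.odd_pow' two_ne_zero).mp (hg ▸ hodd)
  have htriple : PythagoreanTriple g (2 * u) k := by
    rw [PythagoreanTriple]; linear_combination hk' - hg
  have hcop' : IsCoprime g (2 * u) := (Int.isCoprime_two_right.mpr hg_odd).mul_right
    ((IsCoprime.pow_left_iff two_pos).mp (hg ▸ hu'))
  have hk₀ : 0 < k := lt_of_pow_lt_pow_left₀ 2 hk (by rwa [← hk', zero_pow two_ne_zero])
  obtain ⟨m, n, hgmn, humn, -, hmn, -, -⟩ := htriple.coprime_classification'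
    (Int.isCoprime_iff_gcd_eq_one.mp hcop') (Int.odd_iff.mp hg_odd) hk₀
  obtain rfl : u = m * n := by linarith
  subst hgmn
  refine ⟨m, n, Int.isCoprime_iff_gcd_eq_one.mpr hmn, hu, ?_, by linear_combination -hg⟩
  intro hmn'
  exact Int.ne_zero_of_odd hg_odd (by rw [hmn', sub_self])

namespace IsNontrivialQuarticSolution

variable {x y w : ℤ}

theorem symm (hs : IsNontrivialQuarticSolution x y w) : IsNontrivialQuarticSolution y x w where
  isCoprime := hs.isCoprime.symm
  mul_ne_zero := by rw [mul_comm]; exact hs.mul_ne_zero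
  sq_ne_sq := hs.sq_ne_sq.symm
  eq := by linear_combination hs.eq

theorem descent_of_odd_odd (hs : IsNontrivialQuarticSolution x y w) (hx : Odd x)
    (hy : Odd y) : ∃ x' y' w', IsNontrivialQuarticSolution x' y' w' ∧ w' ^ 2 < w ^ 2 := by
  have hw : 0 < |w| := by
    refine abs_pos.mpr fun hw => hs.mul_ne_zero (pow_eq_zero_iff two_ne_zero |>.mp ?_)
    nlinarith [hs.eq, sq_nonneg (x ^ 2 - y ^ 2), sq_nonneg (x * y)]
  have htriple : PythagoreanTriple (x * y) (x ^ 2 - y ^ 2) |w| := by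
    rw [PythagoreanTriple, abs_mul_abs_self]; linear_combination hs.eq
  have hcop : IsCoprime (x * y) (x ^ 2 - y ^ 2) := by
    refine IsCoprime.mul_left ?_ ?_
    · rw [show x ^ 2 - y ^ 2 = -y ^ 2 + x * x by ring]
      exact hs.isCoprime.pow_right.neg_right.add_mul_left_right x
    · rw [show x ^ 2 - y ^ 2 = x ^ 2 + y * -y by ring]
      exact hs.isCoprime.symm.pow_right.add_mul_left_right (-y)
  obtain ⟨m, n, hxy, hxy2, hwmn, hmn, -, -⟩ := htriple.coprime_classification'
    (Int.isCoprime_iff_gcd_eq_one.mp hcop) (Int.odd_iff.mp (hx.mul hy)) hw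
  obtain ⟨k, hsum⟩ := (hx.pow (n := 2)).add_odd (hy.pow (n := 2))
  have hmn0 : m * n ≠ 0 := by
    intro h0; apply hs.sq_ne_sq; linear_combination hxy2 + 2 * h0
  have hk : m ^ 4 - m ^ 2 * n ^ 2 + n ^ 4 = k ^ 2 := by
    refine mul_left_cancel₀ (four_ne_zero (α := ℤ)) ?_
    calc 4 * (m ^ 4 - m ^ 2 * n ^ 2 + n ^ 4)
      _ = 4 * (m ^ 2 - n ^ 2) ^ 2 + (2 * m * n) ^ 2 := by ring
      _ = 4 * (x * y) ^ 2 + (x ^ 2 - y ^ 2) ^ 2 := by rw [hxy, hxy2]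
      _ = (k + k) ^ 2 := by rw [← hsum]; ring
      _ = 4 * k ^ 2 := by ring
  refine ⟨m, n, k, ⟨Int.isCoprime_iff_gcd_eq_one.mpr hmn, hmn0, ?_, hk⟩, ?_⟩
  · intro h; apply hs.mul_ne_zero; rw [hxy, h, sub_self]
  · rw [← sq_abs w, hwmn, ← hk]
    nlinarith [pow_pos (mul_self_pos.mpr hmn0) 1]

theorem descent_of_odd_even (hs : IsNontrivialQuarticSolution x y w) (hx : Odd x)
    (hy : Even y) : ∃ x' y' w', IsNontrivialQuarticSolution x' y' w' ∧ w' ^ 2 < w ^ 2 := by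
  obtain ⟨c, rfl⟩ := hy.two_dvd
  have hc : c ≠ 0 := right_ne_zero_of_mul (right_ne_zero_of_mul hs.mul_ne_zero)
  obtain ⟨u, v, huv, hu, hprod, hw⟩ :=
    exists_sq_eq_sq_sub_sq_mul_sq_add_three_mul_sq hs.isCoprime.of_mul_right_right hx hc hs.eq
  obtain ⟨m, n, hmn⟩ := exists_isNontrivialQuarticSolution_of_sq_eq_mul hx huv hu hprod
  refine ⟨m, n, v, hmn, sq_lt_sq.mpr ?_⟩
  calc |v| = v.natAbs := (Int.natCast_natAbs v).symm
    _ ≤ v ^ 2 := Int.natAbs_le_self_sq v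
    _ ≤ (v ^ 2) ^ 2 := Int.le_self_sq _
    _ = v ^ 4 := by ring
    _ < |w| := by rw [hw]; have := pow_pos (sq_pos_of_ne_zero hu) 2; nlinarith

theorem descent (hs : IsNontrivialQuarticSolution x y w) :
    ∃ x' y' w', IsNontrivialQuarticSolution x' y' w' ∧ w' ^ 2 < w ^ 2 := by
  rcases Int.even_or_odd x with hx | hx <;> rcases Int.even_or_odd y with hy | hy
  · exact absurd (hs.isCoprime.isUnit_of_dvd' hx.two_dvd hy.two_dvd) Int.prime_two.not_isUnit
  · exact hs.symm.descent_of_odd_even hy hx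
  · exact hs.descent_of_odd_even hx hy
  · exact hs.descent_of_odd_odd hx hy

end IsNontrivialQuarticSolution

theorem not_isNontrivialQuarticSolution (x y w : ℤ) : ¬IsNontrivialQuarticSolution x y w := by
  intro hs
  obtain ⟨x', y', w', hs', hlt⟩ := hs.descent
  have := Int.natAbs_lt_iff_sq_lt.mpr hlt
  exact not_isNontrivialQuarticSolution x' y' w' hs'
termination_by w.natAbs

theorem sq_eq_sq_of_pow_six_add_pow_six_eq_two_mul_sq {a b d : ℤ} (hab : IsCoprime a b)
    (h : a ^ 6 + b ^ 6 = 2 * d ^ 2) : a ^ 2 = b ^ 2 := by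
  have hpar : Even a ↔ Even b := by
    have : Even (a ^ 6 + b ^ 6) := ⟨d ^ 2, by rw [h]; ring⟩
    rwa [Int.even_add, Int.even_pow' (by norm_num), Int.even_pow' (by norm_num)] at this
  have ha : Odd a := Int.not_even_iff_odd.mp fun ha =>
    Int.prime_two.not_isUnit (hab.isUnit_of_dvd' ha.two_dvd (hpar.mp ha).two_dvd)
  have hb : Odd b := Int.not_even_iff_odd.mp (hpar.not.mp (Int.not_even_iff_odd.mpr ha))
  obtain ⟨k, hk⟩ := (ha.pow (n := 2)).add_odd (hb.pow (n := 2))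
  have hd : (a ^ 4 - a ^ 2 * b ^ 2 + b ^ 4) * k = d ^ 2 :=
    mul_left_cancel₀ two_ne_zero (by linear_combination h - (a ^ 4 - a ^ 2 * b ^ 2 + b ^ 4) * hk)
  have hcop : IsCoprime (a ^ 4 - a ^ 2 * b ^ 2 + b ^ 4) k := by
    have h2k : ∀ {p q : ℤ}, IsCoprime p q → p ^ 2 + q ^ 2 = k + k → IsCoprime p k := by
      intro p q hpq hk
      refine IsCoprime.of_mul_right_right (y := 2) ?_
      rw [two_mul, ← hk, show p ^ 2 + q ^ 2 = q ^ 2 + p * p by ring]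
      exact hpq.pow_right.add_mul_left_right p
    have h3 : IsCoprime 3 k := by
      refine IsCoprime.of_mul_right_right (y := 2) ?_
      rw [two_mul, ← hk]
      exact Int.isCoprime_three_sq_add_sq hab
    have hab3 : IsCoprime (-(3 * (a * b) ^ 2)) k :=
      (h3.mul_left ((h2k hab hk).mul_left (h2k hab.symm (by rw [← hk]; ring))).pow_left).neg_left
    rw [show a ^ 4 - a ^ 2 * b ^ 2 + b ^ 4 = -(3 * (a * b) ^ 2) + (4 * k) * k by
      linear_combination (a ^ 2 + b ^ 2 + k + k) * hk]
    exact hab3.add_mul_right_left _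
  obtain ⟨t, -, ht⟩ := Int.exists_pow_eq_of_isCoprime_of_nonneg hcop hd
    (by nlinarith [sq_nonneg (a ^ 2 - b ^ 2), sq_nonneg (a * b)])
  by_contra hne
  exact not_isNontrivialQuarticSolution a b t
    ⟨hab, mul_ne_zero (Int.ne_zero_of_odd ha) (Int.ne_zero_of_odd hb), hne, ht⟩

theorem Rat.sq_eq_one_of_sq_eq_two_mul_pow_six_add_two {x y : ℚ}
    (h : y ^ 2 = 2 * x ^ 6 + 2) : x ^ 2 = 1 := by
  have hden : (x.den : ℚ) ≠ 0 := by positivity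
  have hx : x = x.num / x.den := (Rat.num_div_den x).symm
  have hsq : IsSquare ((2 * (x.num ^ 6 + (x.den : ℤ) ^ 6) : ℤ) : ℚ) := by
    refine ⟨y * x.den ^ 3, ?_⟩
    rw [hx] at h
    field_simp at h
    push_cast
    linear_combination -h
  obtain ⟨r, hr⟩ := Rat.isSquare_intCast_iff.mp hsq
  obtain ⟨d, rfl⟩ : 2 ∣ r := ((Int.even_mul.mp (hr ▸ even_two_mul _)).elim id id).two_dvd
  have hab := sq_eq_sq_of_pow_six_add_pow_six_eq_two_mul_sq (Rat.isCoprime_num_den x)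
    (d := d) (mul_left_cancel₀ two_ne_zero (by linear_combination hr))
  rw [hx, div_pow, div_eq_one_iff_eq (pow_ne_zero 2 hden)]
  exact_mod_cast hab

/-- The only rational points on the affine curve `y² = 2x⁶ + 2` are
`(1, 2)`, `(1, -2)`, `(-1, 2)`, and `(-1, -2)`. -/
theorem rational_points_of_genus_two_curve_three (x y : ℚ) :
    y ^ 2 = 2 * x ^ 6 + 2 ↔ (x = 1 ∨ x = -1) ∧ (y = 2 ∨ y = -2) := by
  constructor
  · intro h
    have hx := Rat.sq_eq_one_of_sq_eq_two_mul_pow_six_add_two h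
    have hy : y ^ 2 = 2 ^ 2 := by rw [h, show x ^ 6 = (x ^ 2) ^ 3 by ring, hx]; norm_num
    exact ⟨sq_eq_one_iff.mp hx, sq_eq_sq_iff_eq_or_eq_neg.mp hy⟩
  · rintro ⟨rfl | rfl, rfl | rfl⟩ <;> norm_num
end

section
/- The only rational points on the plane projective quartic curve x³y + x³z + 3y³z + 3y²z² + 3yz³ = 0 are [1 : 0 : 0], [0 : 1 : 0], and [0 : 0 : 1]. Equivalently, for rational numbers x, y, z not all zero satisfying x³y + x³z + 3y³z + 3y²z² + 3yz³ = 0, at least two of x, y, z are zero. -/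
/-!
Write `Q(y, z) = y² + yz + z²`, so that the curve is `x³(y + z) + 3yz Q(y, z) = 0`. Away from the
three coordinate points, scale `(y, z)` to a coprime integer pair `(Y, Z)` and write `x = a / b` in
lowest terms: `a³(Y + Z) = -3b³ YZ Q`. As `Y + Z` is coprime to `YZ Q`, we get `Y + Z = c b³` with
`c ∣ 3`. If `c = ±3`, then `YZ Q` is a cube, so `Y` and `Z` are cubes whose sum is `±3b³`. If
`c = ±1`, then `YZ Q = 9k³`; then `3 ∣ Y` (say) and `Q` is a cube, and the parametrisation of
`y² + yz + z² = t³` by `y - zω = ωᵏ (p + qω)³` in the Eisenstein integers gives `pq(p - q) = 3m³`,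
which again produces a coprime solution of `X³ + Y³ = 3Z³`. That equation has none with `Z ≠ 0`,
by Euler's descent through the same parametrisation.
-/

open QuadraticAlgebra

theorem Int.exists_abs_two_mul_sub_mul_le (c : ℤ) {n : ℤ} (hn : 0 < n) :
    ∃ q, |2 * (c - n * q)| ≤ n := by
  refine ⟨(2 * c + n) / (2 * n), abs_le.2 ⟨?_, ?_⟩⟩ <;>
  nlinarith [Int.mul_ediv_add_emod (2 * c + n) (2 * n),
    Int.emod_nonneg (2 * c + n) (by omega : 2 * n ≠ 0),
    Int.emod_lt_of_pos (2 * c + n) (by omega : 0 < 2 * n)]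

/-- `ℤ[ω]` with `ω² = -1 - ω`. -/
abbrev EisensteinInt : Type := QuadraticAlgebra ℤ (-1) (-1)

namespace EisensteinInt

theorem norm_eq (z : EisensteinInt) : z.norm = z.re ^ 2 - z.re * z.im + z.im ^ 2 := by
  rw [norm_def]; ring

theorem four_mul_norm (z : EisensteinInt) :
    4 * z.norm = (2 * z.re - z.im) ^ 2 + 3 * z.im ^ 2 := by
  rw [norm_eq]; ring

theorem norm_nonneg (z : EisensteinInt) : 0 ≤ z.norm := by
  nlinarith [four_mul_norm z, sq_nonneg (2 * z.re - z.im), sq_nonneg z.im]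

theorem norm_pos {z : EisensteinInt} (hz : z ≠ 0) : 0 < z.norm := by
  refine (norm_nonneg z).lt_of_ne fun h => hz ?_
  have h4 := four_mul_norm z
  have him : z.im = 0 := by nlinarith [sq_nonneg (2 * z.re - z.im), sq_nonneg z.im]
  have hre : z.re = 0 := by rw [him] at h4; nlinarith
  ext <;> assumption

theorem exists_norm_sub_mul_lt (x : EisensteinInt) {y : EisensteinInt} (hy : y ≠ 0) :
    ∃ q, (x - y * q).norm < y.norm := by
  have hn := norm_pos hy
  obtain ⟨q₁, h₁⟩ := Int.exists_abs_two_mul_sub_mul_le (x * star y).re hn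
  obtain ⟨q₂, h₂⟩ := Int.exists_abs_two_mul_sub_mul_le (x * star y).im hn
  refine ⟨⟨q₁, q₂⟩, lt_of_mul_lt_mul_right ?_ hn.le⟩
  -- `(x - yq) ȳ = x ȳ - N(y) q`, whose coordinates are at most `N(y) / 2` in absolute value
  have key : (x - y * ⟨q₁, q₂⟩).norm * y.norm =
      ((x * star y).re - y.norm * q₁) ^ 2 - ((x * star y).re - y.norm * q₁) *
        ((x * star y).im - y.norm * q₂) + ((x * star y).im - y.norm * q₂) ^ 2 := by
    simp only [norm_eq, re_mul, im_mul, re_star, im_star, re_sub, im_sub]; ring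
  rw [key]
  nlinarith [abs_le.1 h₁, abs_le.1 h₂]

noncomputable def quotient (x y : EisensteinInt) : EisensteinInt :=
  if hy : y = 0 then 0 else (exists_norm_sub_mul_lt x hy).choose

noncomputable instance : EuclideanDomain EisensteinInt where
  quotient := quotient
  quotient_zero _ := dif_pos rfl
  remainder x y := x - y * quotient x y
  quotient_mul_add_remainder_eq _ _ := add_sub_cancel _ _
  r := InvImage (· < ·) fun z : EisensteinInt => z.norm.toNat
  r_wellFounded := InvImage.wf _ wellFounded_lt
  remainder_lt x y hy := by
    simp only [InvImage, quotient, dif_neg hy]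
    exact (Int.toNat_lt_toNat (norm_pos hy)).2 (exists_norm_sub_mul_lt x hy).choose_spec
  mul_left_not_lt x y hy := by
    simp only [InvImage, map_mul, not_lt]
    exact Int.toNat_le_toNat (le_mul_of_one_le_right (norm_nonneg x) (norm_pos hy))

theorem isUnit_iff_norm_eq_one {z : EisensteinInt} : IsUnit z ↔ z.norm = 1 := by
  rw [isUnit_iff_norm_isUnit, Int.isUnit_iff]
  have := norm_nonneg z
  omega

theorem exists_eq_cube_mul_omega_pow_of_isUnit {u : EisensteinInt} (hu : IsUnit u) :
    ∃ v : EisensteinInt, ∃ k < 3, u = v ^ 3 * ω ^ k := by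
  have h4 := four_mul_norm u
  rw [isUnit_iff_norm_eq_one.1 hu] at h4
  obtain ⟨a, b⟩ := u
  dsimp only at h4
  have hb : b ^ 2 ≤ 1 := by nlinarith [sq_nonneg (2 * a - b)]
  have hb₁ : -1 ≤ b := by nlinarith
  have hb₂ : b ≤ 1 := by nlinarith
  have ha₁ : -1 ≤ a := by nlinarith
  have ha₂ : a ≤ 1 := by nlinarith
  interval_cases a <;> interval_cases b <;> norm_num at h4
  · exact ⟨1, 2, by norm_num, by decide⟩
  · exact ⟨-1, 0, by norm_num, by decide⟩
  · exact ⟨-1, 1, by norm_num, by decide⟩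
  · exact ⟨1, 1, by norm_num, by decide⟩
  · exact ⟨1, 0, by norm_num, by decide⟩
  · exact ⟨-1, 2, by norm_num, by decide⟩

theorem isCoprime_star {α : EisensteinInt} (hα : IsCoprime α.re α.im) (h3 : ¬ 3 ∣ α.norm) :
    IsCoprime α (star α) := by
  rw [← isRelPrime_iff_isCoprime]
  intro d hdα hdα'
  obtain ⟨u, v, huv⟩ := hα
  -- `√-3 = 1 + 2ω` lies in the ideal generated by `α` and its conjugate
  have hs : d ∣ ⟨1, 2⟩ := by
    have : (⟨1, 2⟩ : EisensteinInt) =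
        (v : EisensteinInt) * (α - star α) - (u : EisensteinInt) * (ω ^ 2 * α - ω * star α) := by
      ext <;> simp only [pow_two, re_sub, im_sub, re_mul, im_mul, re_star, im_star, re_intCast,
        im_intCast, omega_re, omega_im]
      · linear_combination -huv
      · linear_combination -2 * huv
    rw [this]
    exact dvd_sub (dvd_mul_of_dvd_right (dvd_sub hdα hdα') _)
      (dvd_mul_of_dvd_right (dvd_sub (hdα.mul_left _) (hdα'.mul_left _)) _)
  have hd3 : d ∣ 3 := by
    rw [show (3 : EisensteinInt) = -(⟨1, 2⟩ * ⟨1, 2⟩) by decide]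
    exact (hs.mul_right _).neg_right
  have hdN : d ∣ algebraMap ℤ EisensteinInt α.norm := by
    rw [algebraMap_norm_eq_mul_star]
    exact hdα.mul_right _
  have hcop : IsCoprime (3 : EisensteinInt) (algebraMap ℤ EisensteinInt α.norm) := by
    simpa using ((Int.prime_three.coprime_iff_not_dvd).2 h3).map (algebraMap ℤ EisensteinInt)
  exact hcop.isUnit_of_dvd' hd3 hdN

theorem isCoprime_re_im_of_dvd {α β : EisensteinInt} (h : β ∣ α) (hα : IsCoprime α.re α.im) :
    IsCoprime β.re β.im := by
  rw [← isRelPrime_iff_isCoprime]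
  intro g hre him
  have hgα := algebraMap_dvd_iff.1 ((algebraMap_dvd_iff.2 ⟨hre, him⟩).trans h)
  exact hα.isUnit_of_dvd' hgα.1 hgα.2

theorem exists_eq_cube_mul_omega_pow {α : EisensteinInt} {t : ℤ} (hα : IsCoprime α.re α.im)
    (ht : ¬ 3 ∣ t) (hN : α.norm = t ^ 3) :
    ∃ β : EisensteinInt, IsCoprime β.re β.im ∧ ∃ k < 3, α = β ^ 3 * ω ^ k := by
  have h3 : ¬ 3 ∣ α.norm := hN ▸ fun h => ht (Int.prime_three.dvd_of_dvd_pow h)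
  have hprod : α * star α = algebraMap ℤ EisensteinInt t ^ 3 := by
    rw [← algebraMap_norm_eq_mul_star, hN, map_pow]
  obtain ⟨d, u, hu⟩ := exists_associated_pow_of_mul_eq_pow' (isCoprime_star hα h3) hprod
  obtain ⟨v, k, hk, huv⟩ := exists_eq_cube_mul_omega_pow_of_isUnit u.isUnit
  have hα' : α = (d * v) ^ 3 * ω ^ k := by rw [← hu, huv]; ring
  exact ⟨d * v, isCoprime_re_im_of_dvd ⟨(d * v) ^ 2 * ω ^ k, by rw [hα']; ring⟩ hα, k, hk, hα'⟩

end EisensteinInt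

/-- The three alternatives are `y - zω = ωᵏ (p + qω)³` for `k = 0, 1, 2`. -/
theorem Int.exists_of_sq_add_mul_add_sq_eq_cube {y z t : ℤ} (hyz : IsCoprime y z)
    (ht : ¬ 3 ∣ t) (h : y ^ 2 + y * z + z ^ 2 = t ^ 3) :
    ∃ p q : ℤ, IsCoprime p q ∧
      (y = p ^ 3 - 3 * p * q ^ 2 + q ^ 3 ∧ z = -(3 * p * q * (p - q)) ∨
       y = -(3 * p * q * (p - q)) ∧ z = -(q ^ 3 - 3 * q * p ^ 2 + p ^ 3) ∨
       y = 3 * p * q * (p - q) - (p ^ 3 - 3 * p * q ^ 2 + q ^ 3) ∧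
         z = p ^ 3 - 3 * p * q ^ 2 + q ^ 3) := by
  obtain ⟨⟨p, q⟩, hpq, k, hk, hα⟩ := EisensteinInt.exists_eq_cube_mul_omega_pow
    (α := ⟨y, -z⟩) hyz.neg_right ht (by rw [EisensteinInt.norm_eq, ← h]; ring)
  refine ⟨p, q, hpq, ?_⟩
  have hre := congrArg re hα
  have him := congrArg im hα
  interval_cases k <;>
    simp only [pow_succ, pow_zero, one_mul, mul_one, mk_mul_mk, re_mul, im_mul, omega_re, omega_im]
      at hre him
  · exact .inl ⟨by linear_combination hre, by linear_combination -him⟩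
  · exact .inr (.inl ⟨by linear_combination hre, by linear_combination -him⟩)
  · exact .inr (.inr ⟨by linear_combination hre, by linear_combination -him⟩)

section Coprime

variable {R : Type*} [CommRing R] {y z : R}

theorem IsCoprime.add_isCoprime_mul (h : IsCoprime y z) : IsCoprime (y + z) (y * z) := by
  refine IsCoprime.mul_right ?_ ?_
  · simpa only [mul_one, add_comm] using h.symm.add_mul_left_left 1
  · simpa only [mul_one] using h.add_mul_left_left 1

theorem IsCoprime.sq_add_mul_add_sq_left (h : IsCoprime y z) :
    IsCoprime y (y ^ 2 + y * z + z ^ 2) := by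
  have := (h.mul_right h).add_mul_left_right (y + z)
  rwa [show z * z + y * (y + z) = y ^ 2 + y * z + z ^ 2 by ring] at this

theorem IsCoprime.sq_add_mul_add_sq_right (h : IsCoprime y z) :
    IsCoprime z (y ^ 2 + y * z + z ^ 2) := by
  have := h.symm.sq_add_mul_add_sq_left
  rwa [show z ^ 2 + z * y + y ^ 2 = y ^ 2 + y * z + z ^ 2 by ring] at this

end Coprime

theorem Int.exists_eq_cube_of_mul_eq_cube {a b c : ℤ} (hab : IsCoprime a b) (h : a * b = c ^ 3) :
    ∃ d, a = d ^ 3 :=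
  Int.eq_pow_of_mul_eq_pow_odd_left hab (by decide) h

theorem Int.three_dvd_of_three_mul_cast_eq_zero {n : ℤ} (h : 3 * (n : ZMod 9) = 0) : 3 ∣ n := by
  have : (9 : ℤ) ∣ 3 * n := (ZMod.intCast_zmod_eq_zero_iff_dvd _ 9).1 (by push_cast; exact h)
  omega

theorem Int.not_nine_dvd_sq_add_mul_add_sq {y z : ℤ} (hyz : IsCoprime y z) :
    ¬ 9 ∣ y ^ 2 + y * z + z ^ 2 := by
  intro h
  have key : ∀ a b : ZMod 9, a ^ 2 + a * b + b ^ 2 = 0 → 3 * a = 0 ∧ 3 * b = 0 := by decide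
  have h9 := (ZMod.intCast_zmod_eq_zero_iff_dvd _ 9).2 h
  push_cast at h9
  obtain ⟨hy, hz⟩ := key y z h9
  exact Int.prime_three.not_isUnit (hyz.isUnit_of_dvd'
    (Int.three_dvd_of_three_mul_cast_eq_zero hy) (Int.three_dvd_of_three_mul_cast_eq_zero hz))

theorem Int.not_nine_dvd_cube_sub_three_mul_add_cube {p q : ℤ} (hpq : IsCoprime p q) :
    ¬ 9 ∣ p ^ 3 - 3 * p * q ^ 2 + q ^ 3 := by
  intro h
  have key : ∀ a b : ZMod 9, a ^ 3 - 3 * a * b ^ 2 + b ^ 3 = 0 → 3 * a = 0 ∧ 3 * b = 0 := by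
    decide
  have h9 := (ZMod.intCast_zmod_eq_zero_iff_dvd _ 9).2 h
  push_cast at h9
  obtain ⟨hp, hq⟩ := key p q h9
  exact Int.prime_three.not_isUnit (hpq.isUnit_of_dvd'
    (Int.three_dvd_of_three_mul_cast_eq_zero hp) (Int.three_dvd_of_three_mul_cast_eq_zero hq))

theorem Int.three_dvd_add_of_cube_add_cube_eq_three_mul {x y w : ℤ}
    (h : x ^ 3 + y ^ 3 = 3 * w) : 3 ∣ x + y := by
  have key : ∀ a : ZMod 3, a ^ 3 = a := by decide
  have h3 := congrArg (fun n : ℤ => (n : ZMod 3)) h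
  push_cast [key] at h3
  refine (ZMod.intCast_zmod_eq_zero_iff_dvd _ 3).1 ?_
  rw [Int.cast_add, h3, show (3 : ZMod 3) = 0 from rfl, zero_mul]

theorem Int.exists_cube_add_cube_eq_three_mul_cube_of_add_add_eq_zero {a b c k : ℤ}
    (hab : IsCoprime a b) (hsum : a + b + 3 * c = 0) (hprod : a * b * c = k ^ 3) (hk : k ≠ 0) :
    ∃ X Y Z : ℤ, IsCoprime X Y ∧ Z ≠ 0 ∧ Z ∣ k ∧ X ^ 3 + Y ^ 3 = 3 * Z ^ 3 := by
  have hac : IsCoprime a c := by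
    have := (hab.add_mul_left_right 1).neg_right
    rw [show -(b + a * 1) = 3 * c by linarith] at this
    exact this.of_mul_right_right
  have hbc : IsCoprime b c := by
    have := (hab.symm.add_mul_left_right 1).neg_right
    rw [show -(a + b * 1) = 3 * c by linarith] at this
    exact this.of_mul_right_right
  obtain ⟨α, rfl⟩ := Int.exists_eq_cube_of_mul_eq_cube (hab.mul_right hac) (by rw [← hprod]; ring)
  obtain ⟨β, rfl⟩ := Int.exists_eq_cube_of_mul_eq_cube (hab.symm.mul_right hbc)
    (by rw [← hprod]; ring)
  obtain ⟨γ, rfl⟩ := Int.exists_eq_cube_of_mul_eq_cube (hac.symm.mul_right hbc.symm)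
    (by rw [← hprod]; ring)
  refine ⟨α, β, -γ, (IsCoprime.pow_iff three_pos three_pos).1 hab, ?_, ?_, ?_⟩
  · intro h
    apply hk
    simpa [neg_eq_zero.1 h] using hprod.symm
  · rw [neg_dvd, ← Int.pow_dvd_pow_iff three_ne_zero, ← hprod]
    exact Dvd.intro_left _ rfl
  · linear_combination hsum

theorem Int.exists_cube_add_cube_eq_three_mul_cube_of_mul_mul_sub {p q k : ℤ}
    (hpq : IsCoprime p q) (hk : k ≠ 0) (h : p * q * (p - q) = 3 * k ^ 3) :
    ∃ X Y Z : ℤ, IsCoprime X Y ∧ Z ≠ 0 ∧ Z ∣ k ∧ X ^ 3 + Y ^ 3 = 3 * Z ^ 3 := by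
  have hpq' : IsCoprime p (q - p) := by
    have := hpq.add_mul_left_right (-1); rwa [show q + p * -1 = q - p by ring] at this
  have hqp' : IsCoprime (-q) (q - p) := by
    have := hpq.symm.neg_neg.add_mul_left_right (-1)
    rwa [show -p + -q * -1 = q - p by ring] at this
  -- `p`, `-q` and `q - p` sum to zero; divide the one that is a multiple of 3
  rcases Int.prime_three.dvd_mul.1 (Dvd.intro _ h.symm) with h3 | ⟨r, hr⟩
  · rcases Int.prime_three.dvd_mul.1 h3 with ⟨r, rfl⟩ | ⟨r, rfl⟩
    · exact Int.exists_cube_add_cube_eq_three_mul_cube_of_add_add_eq_zero (c := r) hqp' (by ring)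
        (mul_left_cancel₀ three_ne_zero (by linear_combination h)) hk
    · exact Int.exists_cube_add_cube_eq_three_mul_cube_of_add_add_eq_zero (c := -r) hpq' (by ring)
        (mul_left_cancel₀ three_ne_zero (by linear_combination h)) hk
  · exact Int.exists_cube_add_cube_eq_three_mul_cube_of_add_add_eq_zero (c := -r) hpq.neg_right
      (by linarith) (mul_left_cancel₀ three_ne_zero (by linear_combination h - p * q * hr)) hk

theorem Int.exists_of_cube_add_cube_eq_three_mul_cube {X Y Z : ℤ} (hXY : IsCoprime X Y)
    (h : X ^ 3 + Y ^ 3 = 3 * Z ^ 3) :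
    ∃ k e : ℤ, X + Y = 27 * k ^ 3 ∧ X ^ 2 - X * Y + Y ^ 2 = 3 * e ^ 3 ∧ ¬ 3 ∣ e ∧ 3 * k ∣ Z := by
  obtain ⟨V, hV⟩ := Int.three_dvd_add_of_cube_add_cube_eq_three_mul h
  have hXY3 : ¬ 3 ∣ X * Y := by
    intro h3
    refine Int.prime_three.not_isUnit (hXY.isUnit_of_dvd' ?_ ?_) <;>
      rcases Int.prime_three.dvd_mul.1 h3 with ⟨r, hr⟩ | ⟨r, hr⟩ <;>
      first | exact ⟨r, hr⟩ | exact ⟨V - r, by linarith⟩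
  have hprod : (X + Y) * (3 * V ^ 2 - X * Y) = Z ^ 3 :=
    mul_left_cancel₀ three_ne_zero (by linear_combination h - (X + Y) * (X + Y + 3 * V) * hV)
  have hco : IsCoprime (X + Y) (3 * V ^ 2 - X * Y) := by
    have := hXY.add_isCoprime_mul.neg_right.add_mul_left_right V
    rwa [show -(X * Y) + (X + Y) * V = 3 * V ^ 2 - X * Y by linear_combination V * hV] at this
  obtain ⟨a, ha⟩ := Int.exists_eq_cube_of_mul_eq_cube hco hprod
  obtain ⟨e, he⟩ := Int.exists_eq_cube_of_mul_eq_cube (c := Z) hco.symm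
    (by linear_combination hprod)
  obtain ⟨k, rfl⟩ : 3 ∣ a := Int.prime_three.dvd_of_dvd_pow (ha ▸ (⟨V, hV⟩ : 3 ∣ X + Y))
  refine ⟨k, e, by linear_combination ha, by linear_combination 3 * he + (X + Y + 3 * V) * hV,
    ?_, (Int.pow_dvd_pow_iff three_ne_zero).1 (Dvd.intro _ (ha ▸ hprod))⟩
  rintro ⟨r, rfl⟩
  exact hXY3 ⟨V ^ 2 - 9 * r ^ 3, by linear_combination -he⟩

theorem Int.exists_smaller_cube_add_cube_eq_three_mul_cube {X Y Z : ℤ} (hXY : IsCoprime X Y)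
    (hZ : Z ≠ 0) (h : X ^ 3 + Y ^ 3 = 3 * Z ^ 3) :
    ∃ X' Y' Z' : ℤ, IsCoprime X' Y' ∧ Z' ≠ 0 ∧ Z'.natAbs < Z.natAbs ∧
      X' ^ 3 + Y' ^ 3 = 3 * Z' ^ 3 := by
  obtain ⟨k, e, hk, he, he3, hkZ⟩ := Int.exists_of_cube_add_cube_eq_three_mul_cube hXY h
  have hk0 : k ≠ 0 := by
    rintro rfl
    exact hZ (zero_dvd_iff.1 (by simpa using hkZ))
  have hyz : IsCoprime (X - 9 * k ^ 3) (-(9 * k ^ 3)) := by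
    have hX : IsCoprime X (3 * (9 * k ^ 3)) := by
      have := hXY.add_mul_left_right 1; rwa [show Y + X * 1 = 3 * (9 * k ^ 3) by linarith] at this
    have := hX.of_mul_right_right.add_mul_left_left (-1)
    rw [show X + 9 * k ^ 3 * -1 = X - 9 * k ^ 3 by ring] at this
    exact this.neg_right
  -- `e³` is the norm of `(X - 9k³) + 9k³ω`
  obtain ⟨p, q, hpq, hcases⟩ := Int.exists_of_sq_add_mul_add_sq_eq_cube hyz he3
    (mul_left_cancel₀ three_ne_zero (by linear_combination he - (Y - 2 * X + 27 * k ^ 3) * hk))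
  rcases hcases with ⟨-, hz⟩ | ⟨-, hz⟩ | ⟨-, hz⟩
  · obtain ⟨X', Y', Z', hco', hZ', hdvd, heq⟩ :=
      Int.exists_cube_add_cube_eq_three_mul_cube_of_mul_mul_sub hpq hk0
        (mul_left_cancel₀ three_ne_zero (by linear_combination hz))
    refine ⟨X', Y', Z', hco', hZ', ?_, heq⟩
    have := Int.natAbs_le_of_dvd_ne_zero hdvd hk0
    have := Int.natAbs_le_of_dvd_ne_zero hkZ hZ
    omega
  · exact (Int.not_nine_dvd_cube_sub_three_mul_add_cube hpq.symm ⟨k ^ 3, by linarith⟩).elim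
  · exact (Int.not_nine_dvd_cube_sub_three_mul_add_cube hpq ⟨-k ^ 3, by linarith⟩).elim

theorem Int.cube_add_cube_ne_three_mul_cube {X Y Z : ℤ} (hXY : IsCoprime X Y) (hZ : Z ≠ 0) :
    X ^ 3 + Y ^ 3 ≠ 3 * Z ^ 3 := by
  intro h
  induction hn : Z.natAbs using Nat.strong_induction_on generalizing X Y Z with
  | _ n ih =>
    obtain ⟨X', Y', Z', hXY', hZ', hlt, h'⟩ :=
      Int.exists_smaller_cube_add_cube_eq_three_mul_cube hXY hZ h
    exact ih _ (hn ▸ hlt) hXY' hZ' h' rfl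

theorem Int.mul_mul_sq_add_mul_add_sq_ne_cube {Y Z b : ℤ} (hYZ : IsCoprime Y Z) (hb : b ≠ 0)
    (hsum : Y + Z = 3 * b ^ 3) (k : ℤ) : Y * Z * (Y ^ 2 + Y * Z + Z ^ 2) ≠ k ^ 3 := by
  intro h
  obtain ⟨r, hr⟩ := Int.exists_eq_cube_of_mul_eq_cube
    (hYZ.mul_right hYZ.sq_add_mul_add_sq_left) (by rw [← h]; ring)
  obtain ⟨s, hs⟩ := Int.exists_eq_cube_of_mul_eq_cube
    (hYZ.symm.mul_right hYZ.sq_add_mul_add_sq_right) (by rw [← h]; ring)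
  rw [hr, hs] at hYZ hsum
  exact Int.cube_add_cube_ne_three_mul_cube ((IsCoprime.pow_iff three_pos three_pos).1 hYZ) hb hsum

theorem Int.mul_mul_sq_add_mul_add_sq_ne_nine_mul_cube {Y Z : ℤ} (hYZ : IsCoprime Y Z)
    (hY : Y ≠ 0) (hZ : Z ≠ 0) (k : ℤ) : Y * Z * (Y ^ 2 + Y * Z + Z ^ 2) ≠ 9 * k ^ 3 := by
  intro h
  wlog h3Y : 3 ∣ Y generalizing Y Z
  · refine this hYZ.symm hZ hY (by linear_combination h) ?_
    by_contra h3Z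
    have h9 : IsCoprime 9 (Y * Z) := by
      have h3 : IsCoprime 3 (Y * Z) := (Int.prime_three.coprime_iff_not_dvd).2 fun h3 =>
        (Int.prime_three.dvd_mul.1 h3).elim h3Y h3Z
      simpa using h3.pow_left (m := 2)
    exact Int.not_nine_dvd_sq_add_mul_add_sq hYZ (h9.dvd_of_dvd_mul_left ⟨k ^ 3, h⟩)
  have h3Z : ¬ 3 ∣ Z := fun h3Z => Int.prime_three.not_isUnit (hYZ.isUnit_of_dvd' h3Y h3Z)
  obtain ⟨m, hm⟩ := h3Y
  have h3Q : ¬ 3 ∣ Y ^ 2 + Y * Z + Z ^ 2 := fun ⟨n, hn⟩ => h3Z <|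
    Int.prime_three.dvd_of_dvd_pow (n := 2)
      ⟨n - m * (Y + Z), by linear_combination hn - (Y + Z) * hm⟩
  have h3Z' := (Int.prime_three.coprime_iff_not_dvd).2 h3Z
  have h3Q' := (Int.prime_three.coprime_iff_not_dvd).2 h3Q
  have hYQ := hYZ.sq_add_mul_add_sq_left
  have hZQ := hYZ.sq_add_mul_add_sq_right
  -- `3Y`, `Z` and `Y² + YZ + Z²` are pairwise coprime, with product `(3k)³`
  obtain ⟨W, hW⟩ := Int.exists_eq_cube_of_mul_eq_cube
    ((h3Z'.mul_right h3Q').mul_left (hYZ.mul_right hYQ))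
    (show 3 * Y * (Z * (Y ^ 2 + Y * Z + Z ^ 2)) = (3 * k) ^ 3 by linear_combination 3 * h)
  obtain ⟨t, ht⟩ := Int.exists_eq_cube_of_mul_eq_cube
    ((h3Q'.symm.mul_right hYQ.symm).mul_right hZQ.symm)
    (show (Y ^ 2 + Y * Z + Z ^ 2) * (3 * Y * Z) = (3 * k) ^ 3 by linear_combination 3 * h)
  obtain ⟨w, rfl⟩ : 3 ∣ W := Int.prime_three.dvd_of_dvd_pow (hW ▸ dvd_mul_right 3 Y)
  have hw : w ≠ 0 := by rintro rfl; exact hY (by linarith)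
  obtain ⟨p, q, hpq, hcases⟩ := Int.exists_of_sq_add_mul_add_sq_eq_cube hYZ
    (fun h3t => h3Q (ht ▸ dvd_pow h3t three_ne_zero)) ht
  rcases hcases with ⟨-, hz⟩ | ⟨hy, -⟩ | ⟨hy, hz⟩
  · exact h3Z ⟨-(p * q * (p - q)), by rw [hz]; ring⟩
  · obtain ⟨X', Y', Z', hXY', hZ', -, h'⟩ :=
      Int.exists_cube_add_cube_eq_three_mul_cube_of_mul_mul_sub hpq (neg_ne_zero.2 hw)
        (mul_left_cancel₀ (show (9 : ℤ) ≠ 0 by norm_num) (by linear_combination 3 * hy - hW))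
    exact Int.cube_add_cube_ne_three_mul_cube hXY' hZ' h'
  · exact h3Z ⟨p * q * (p - q) - m, by linear_combination hz + hy - hm⟩

theorem Int.cube_mul_add_add_three_mul_cube_mul_ne_zero {a b Y Z : ℤ} (hab : IsCoprime a b)
    (hb : b ≠ 0) (hYZ : IsCoprime Y Z) (hY : Y ≠ 0) (hZ : Z ≠ 0) :
    a ^ 3 * (Y + Z) + 3 * b ^ 3 * (Y * Z * (Y ^ 2 + Y * Z + Z ^ 2)) ≠ 0 := by
  intro h
  obtain ⟨c, hc⟩ : b ^ 3 ∣ Y + Z := (hab.symm.pow (m := 3) (n := 3)).dvd_of_dvd_mul_left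
    ⟨-3 * (Y * Z * (Y ^ 2 + Y * Z + Z ^ 2)), by linear_combination h⟩
  have hac : a ^ 3 * c = -3 * (Y * Z * (Y ^ 2 + Y * Z + Z ^ 2)) :=
    mul_left_cancel₀ (pow_ne_zero 3 hb) (by linear_combination h - a ^ 3 * hc)
  have hc3 : c ∣ 3 := by
    have hQ : IsCoprime (Y + Z) (Y ^ 2 + Y * Z + Z ^ 2) := by
      have := hYZ.add_isCoprime_mul.neg_right.add_mul_left_right (Y + Z)
      rwa [show -(Y * Z) + (Y + Z) * (Y + Z) = Y ^ 2 + Y * Z + Z ^ 2 by ring] at this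
    exact ((hYZ.add_isCoprime_mul.mul_right hQ).of_isCoprime_of_dvd_left
      (Dvd.intro_left _ hc.symm)).dvd_of_dvd_mul_right
        (Dvd.intro (-a ^ 3) (by linear_combination -hac))
  have hc' : c = 1 ∨ c = -1 ∨ c = 3 ∨ c = -3 := by
    have := Nat.prime_three.eq_one_or_self_of_dvd _ (Int.natAbs_dvd_natAbs.2 hc3)
    omega
  rcases hc' with rfl | rfl | rfl | rfl
  · obtain ⟨a', rfl⟩ : 3 ∣ a := Int.prime_three.dvd_of_dvd_pow (n := 3)
      ⟨-(Y * Z * (Y ^ 2 + Y * Z + Z ^ 2)), by linear_combination hac⟩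
    exact Int.mul_mul_sq_add_mul_add_sq_ne_nine_mul_cube hYZ hY hZ (-a')
      (mul_left_cancel₀ three_ne_zero (by linear_combination hac))
  · obtain ⟨a', rfl⟩ : 3 ∣ a := Int.prime_three.dvd_of_dvd_pow (n := 3)
      ⟨Y * Z * (Y ^ 2 + Y * Z + Z ^ 2), by linear_combination -hac⟩
    exact Int.mul_mul_sq_add_mul_add_sq_ne_nine_mul_cube hYZ hY hZ a'
      (mul_left_cancel₀ three_ne_zero (by linear_combination hac))
  · exact Int.mul_mul_sq_add_mul_add_sq_ne_cube hYZ hb (by linear_combination hc) (-a)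
      (mul_left_cancel₀ three_ne_zero (by linear_combination hac))
  · exact Int.mul_mul_sq_add_mul_add_sq_ne_cube hYZ (neg_ne_zero.2 hb)
      (by linear_combination hc) a (mul_left_cancel₀ three_ne_zero (by linear_combination hac))

theorem Rat.exists_isCoprime_eq_mul (y z : ℚ) (hz : z ≠ 0) :
    ∃ (w : ℚ) (Y Z : ℤ), IsCoprime Y Z ∧ Z ≠ 0 ∧ y = w * Y ∧ z = w * Z := by
  refine ⟨z / (y / z).den, (y / z).num, (y / z).den, Rat.isCoprime_num_den _,
    by exact_mod_cast (y / z).den_nz, ?_, ?_⟩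
  · rw [div_mul_comm, Rat.num_div_den, div_mul_cancel₀ _ hz]
  · rw [Int.cast_natCast]
    field_simp

theorem rational_points_of_plane_quartic_three_general (x y z : ℚ)
    (h : x ^ 3 * y + x ^ 3 * z + 3 * y ^ 3 * z + 3 * y ^ 2 * z ^ 2 + 3 * y * z ^ 3 = 0) :
    (x = 0 ∧ y = 0) ∨ (x = 0 ∧ z = 0) ∨ (y = 0 ∧ z = 0) := by
  rcases eq_or_ne y 0 with rfl | hy
  · rcases mul_eq_zero.1 (show x ^ 3 * z = 0 by linear_combination h) with hx | hz
    · exact .inl ⟨pow_eq_zero_iff three_ne_zero |>.1 hx, rfl⟩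
    · exact .inr (.inr ⟨rfl, hz⟩)
  rcases eq_or_ne z 0 with rfl | hz
  · have hx := (mul_eq_zero.1 (show x ^ 3 * y = 0 by linear_combination h)).resolve_right hy
    exact .inr (.inl ⟨pow_eq_zero_iff three_ne_zero |>.1 hx, rfl⟩)
  exfalso
  obtain ⟨w, Y, Z, hYZ, -, rfl, rfl⟩ := Rat.exists_isCoprime_eq_mul y z hz
  obtain ⟨v, A, B, hAB, hB, rfl, rfl⟩ := Rat.exists_isCoprime_eq_mul x w (left_ne_zero_of_mul hz)
  have hvB : v ^ 4 * B ≠ 0 :=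
    mul_ne_zero (pow_ne_zero 4 (left_ne_zero_of_mul (left_ne_zero_of_mul hz)))
      (by exact_mod_cast hB)
  refine Int.cube_mul_add_add_three_mul_cube_mul_ne_zero hAB hB hYZ
    (by exact_mod_cast right_ne_zero_of_mul hy) (by exact_mod_cast right_ne_zero_of_mul hz) ?_
  have hF : v ^ 4 * B *
      ((A ^ 3 * (Y + Z) + 3 * B ^ 3 * (Y * Z * (Y ^ 2 + Y * Z + Z ^ 2)) : ℤ) : ℚ) = 0 := by
    push_cast; linear_combination h
  exact_mod_cast (mul_eq_zero.1 hF).resolve_left hvB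

/-- The only rational points on the plane projective quartic
`x³y + x³z + 3y³z + 3y²z² + 3yz³ = 0` are `[1 : 0 : 0]`, `[0 : 1 : 0]`, and
`[0 : 0 : 1]`: any rational solution with `(x, y, z) ≠ (0, 0, 0)` has at least
two of `x`, `y`, `z` equal to zero. -/
theorem rational_points_of_plane_quartic_three (x y z : ℚ)
    (hne : ¬(x = 0 ∧ y = 0 ∧ z = 0))
    (h : x ^ 3 * y + x ^ 3 * z + 3 * y ^ 3 * z + 3 * y ^ 2 * z ^ 2 + 3 * y * z ^ 3 = 0) :
    (x = 0 ∧ y = 0) ∨ (x = 0 ∧ z = 0) ∨ (y = 0 ∧ z = 0) :=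
  rational_points_of_plane_quartic_three_general x y z h
end

section
/- Let p ≥ 5 be a prime and k ≥ 1 an integer, and let B₀(pᵏ) denote the subgroup of GL₂(ℤ/pᵏℤ) consisting of those matrices whose lower-left entry is divisible by p. Then for every prime q, the prime q divides the order of the commutator subgroup of B₀(pᵏ) if and only if q = p. Equivalently, the radical of the order of the commutator subgroup of B₀(pᵏ) equals p, i.e., this commutator subgroup is a nontrivial p-group. -/
open Matrix

/-- The Borel-type subgroup `B₀(pᵏ)` of `GL₂(ℤ/pᵏℤ)` consisting of the matrices
whose lower-left entry is divisible by `p`. -/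
def Borel0 (p k : ℕ) : Subgroup (GL (Fin 2) (ZMod (p ^ k))) where
  carrier := {A | (p : ZMod (p ^ k)) ∣ (A : Matrix (Fin 2) (Fin 2) (ZMod (p ^ k))) 1 0}
  one_mem' := by
    simp [Matrix.one_apply]
  mul_mem' := by
    intro A B hA hB
    simp only [Set.mem_setOf_eq, Units.val_mul, Matrix.mul_apply, Fin.sum_univ_two] at *
    exact dvd_add (hA.mul_right _) (hB.mul_left _)
  inv_mem' := by
    intro A hA
    simp only [Set.mem_setOf_eq] at *
    rw [Matrix.coe_units_inv, Matrix.inv_def, Matrix.adjugate_fin_two, Matrix.smul_apply]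
    simp only [Matrix.of_apply, Matrix.cons_val', Matrix.cons_val_zero, Matrix.cons_val_one,
      Matrix.head_cons, Matrix.empty_val', Matrix.cons_val_fin_one, Matrix.head_fin_const,
      smul_eq_mul]
    exact Dvd.dvd.mul_left (dvd_neg.mpr hA) _

/-!
Reduction mod `p` maps `B₀(pᵏ)` into the upper triangular matrices over `𝔽_p`, on which the
diagonal is a homomorphism to an abelian group. Hence every element `g` of the commutator
subgroup reduces to an upper unipotent matrix, so `g ^ p ≡ 1 (mod p)`, and the congruence
`(1 + p y) ^ pᵏ ≡ 1 (mod pᵏ⁺¹)` then gives `g ^ pᵏ⁺¹ = 1`: the commutator subgroup is a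
`p`-group. It is nontrivial because `diag(-1, 1)` and `[1, 1; 0, 1]` do not commute for odd `p`.
-/

open scoped commutatorElement

theorem dvd_pow_pow_sub_one_of_dvd_sub_one {A : Type*} [Ring A] {p : ℕ} {a : A}
    (h : (p : A) ∣ a - 1) (k : ℕ) : (p : A) ^ (k + 1) ∣ a ^ p ^ k - 1 := by
  obtain ⟨y, hy⟩ := h
  -- `A` need not be commutative, so transport the congruence from `ℤ[X]` along `X ↦ y`.
  have key : (p : Polynomial ℤ) ^ (k + 1) ∣
      (1 + (p : Polynomial ℤ) * Polynomial.X) ^ p ^ k - 1 ^ p ^ k :=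
    dvd_sub_pow_of_dvd_sub (by simp) k
  simpa [eq_add_of_sub_eq' hy] using map_dvd (Polynomial.aeval y) key

theorem ZMod.castHom_eq_zero_iff_dvd {m n : ℕ} (h : m ∣ n) (x : ZMod n) :
    ZMod.castHom h (ZMod m) x = 0 ↔ (m : ZMod n) ∣ x := by
  refine ⟨fun hx => ?_, fun ⟨c, hc⟩ => by
    rw [hc, map_mul, map_natCast, ZMod.natCast_self, zero_mul]⟩
  rw [← ZMod.intCast_zmod_cast x, map_intCast, ZMod.intCast_zmod_eq_zero_iff_dvd] at hx
  obtain ⟨c, hc⟩ := hx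
  exact ⟨c, by rw [← ZMod.intCast_zmod_cast x, hc]; push_cast; rfl⟩

theorem Matrix.natCast_dvd_of_forall_dvd {n R : Type*} [Fintype n] [DecidableEq n] [Semiring R]
    {M : Matrix n n R} {p : ℕ} (h : ∀ i j, (p : R) ∣ M i j) : (p : Matrix n n R) ∣ M := by
  choose c hc using h
  exact ⟨of c, by ext i j; simp [hc, ← diagonal_natCast]⟩

section UpperTriangular

variable {R : Type*} [Ring R]

theorem eq_upperRightHom {g : GL (Fin 2) R} (h10 : g 1 0 = 0) (h00 : g 0 0 = 1)
    (h11 : g 1 1 = 1) : g = GeneralLinearGroup.upperRightHom (g 0 1) := by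
  ext i j
  fin_cases i <;> fin_cases j <;> simp [h10, h00, h11]

theorem pow_char_eq_one_of_upper_unipotent (p : ℕ) [CharP R p] {g : GL (Fin 2) R}
    (h10 : g 1 0 = 0) (h00 : g 0 0 = 1) (h11 : g 1 1 = 1) : g ^ p = 1 := by
  rw [eq_upperRightHom h10 h00 h11, ← AddChar.map_nsmul_eq_pow, nsmul_eq_mul,
    CharP.cast_eq_zero, zero_mul, AddChar.map_zero_eq_one]

end UpperTriangular

section UpperTriangularRepresentation

variable {G R : Type*} [Group G] [CommRing R]

def upperTriangularDiag (ρ : G →* GL (Fin 2) R) (hρ : ∀ g, ρ g 1 0 = 0) : G →* (R × R)ˣ :=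
  MonoidHom.toHomUnits
    { toFun g := (ρ g 0 0, ρ g 1 1)
      map_one' := by simp
      map_mul' g h := by simp [Matrix.mul_apply, hρ] }

theorem diag_eq_one_of_mem_commutator (ρ : G →* GL (Fin 2) R) (hρ : ∀ g, ρ g 1 0 = 0)
    {g : G} (hg : g ∈ commutator G) : ρ g 0 0 = 1 ∧ ρ g 1 1 = 1 := by
  have := Abelianization.commutator_subset_ker (upperTriangularDiag ρ hρ) hg
  simpa [upperTriangularDiag, Units.ext_iff, Prod.ext_iff] using this

end UpperTriangularRepresentation

section Borel0

variable {p k : ℕ}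

abbrev reductionModP (hk : k ≠ 0) : GL (Fin 2) (ZMod (p ^ k)) →* GL (Fin 2) (ZMod p) :=
  GeneralLinearGroup.map (ZMod.castHom (dvd_pow_self p hk) (ZMod p))

theorem mem_Borel0_iff_reductionModP (hk : k ≠ 0) {g : GL (Fin 2) (ZMod (p ^ k))} :
    g ∈ Borel0 p k ↔ reductionModP hk g 1 0 = 0 :=
  (ZMod.castHom_eq_zero_iff_dvd (dvd_pow_self p hk) _).symm

theorem pow_pow_eq_one_of_reductionModP_eq_one (hk : k ≠ 0) {g : GL (Fin 2) (ZMod (p ^ k))}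
    (hg : reductionModP hk g = 1) : g ^ p ^ k = 1 := by
  have hdvd : (p : Matrix (Fin 2) (Fin 2) (ZMod (p ^ k))) ∣ g - 1 :=
    Matrix.natCast_dvd_of_forall_dvd fun i j => by
      rw [← ZMod.castHom_eq_zero_iff_dvd (dvd_pow_self p hk), Matrix.sub_apply, map_sub,
        sub_eq_zero, ← GeneralLinearGroup.map_apply, hg, Units.val_one, one_apply, one_apply]
      split_ifs <;> simp only [map_one, map_zero]
  have hzero : (p : Matrix (Fin 2) (Fin 2) (ZMod (p ^ k))) ^ (k + 1) = 0 := by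
    rw [pow_succ, ← Nat.cast_pow, ← map_natCast (scalar (Fin 2)), ZMod.natCast_self, map_zero,
      zero_mul]
  ext1
  rw [Units.val_pow_eq_pow_val, Units.val_one, ← sub_eq_zero, ← zero_dvd_iff, ← hzero]
  exact dvd_pow_pow_sub_one_of_dvd_sub_one hdvd k

theorem pow_pow_succ_eq_one_of_mem_commutator (hk : k ≠ 0) {g : Borel0 p k}
    (hg : g ∈ commutator (Borel0 p k)) : g ^ p ^ (k + 1) = 1 := by
  let ρ := (reductionModP (p := p) hk).comp (Borel0 p k).subtype
  have hρ : ∀ g, ρ g 1 0 = 0 := fun g => (mem_Borel0_iff_reductionModP hk).mp g.2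
  obtain ⟨h00, h11⟩ := diag_eq_one_of_mem_commutator ρ hρ hg
  have hgp : reductionModP hk (g ^ p : GL (Fin 2) (ZMod (p ^ k))) = 1 :=
    map_pow ρ g p ▸ pow_char_eq_one_of_upper_unipotent p (hρ g) h00 h11
  ext1
  simpa [pow_succ', pow_mul] using pow_pow_eq_one_of_reductionModP_eq_one hk hgp

theorem nontrivial_commutator_Borel0 (h : 2 < p ^ k) : Nontrivial (commutator (Borel0 p k)) := by
  have : Fact (2 < p ^ k) := ⟨h⟩
  let s : GL (Fin 2) (ZMod (p ^ k)) :=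
    ⟨!![-1, 0; 0, 1], !![-1, 0; 0, 1], by simp [one_fin_two], by simp [one_fin_two]⟩
  let t : GL (Fin 2) (ZMod (p ^ k)) := GeneralLinearGroup.upperRightHom 1
  have hs : s ∈ Borel0 p k := by simp [Borel0, s]
  have ht : t ∈ Borel0 p k := by simp [Borel0, t]
  have hst : s * t ≠ t * s := fun hst =>
    ZMod.neg_one_ne_one (by simpa [s, t] using congr($hst 0 1))
  rw [Subgroup.nontrivial_iff_exists_ne_one]
  refine ⟨⁅⟨s, hs⟩, ⟨t, ht⟩⁆, Subgroup.commutator_mem_commutator trivial trivial, ?_⟩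
  rwa [Ne, commutatorElement_eq_one_iff_mul_comm, Subtype.ext_iff]

end Borel0

theorem IsPGroup.prime_dvd_card_iff {G : Type*} [Group G] [Finite G] [Nontrivial G] {p q : ℕ}
    (hG : IsPGroup p G) (hp : p.Prime) (hq : q.Prime) : q ∣ Nat.card G ↔ q = p := by
  have : Fact p.Prime := ⟨hp⟩
  obtain ⟨n, hn, hcard⟩ := hG.nontrivial_iff_card.mp ‹_›
  rw [hcard]
  exact ⟨fun h => (Nat.prime_dvd_prime_iff_eq hq hp).mp (hq.dvd_of_dvd_pow h),
    fun h => h ▸ dvd_pow_self q hn.ne'⟩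

/-- For a prime `p ≥ 5` and `k ≥ 1`, a prime `q` divides the order of the commutator
subgroup of `B₀(pᵏ)` if and only if `q = p`. -/
theorem prime_dvd_card_commutator_Borel0_iff (p k : ℕ) (hp : p.Prime) (hp5 : 5 ≤ p)
    (hk : 1 ≤ k) (q : ℕ) (hq : q.Prime) :
    q ∣ Nat.card (commutator ↥(Borel0 p k)) ↔ q = p := by
  have hk0 : k ≠ 0 := by omega
  have : NeZero (p ^ k) := ⟨pow_ne_zero k hp.ne_zero⟩
  have : Nontrivial (commutator (Borel0 p k)) :=
    nontrivial_commutator_Borel0 ((show 2 < p by omega).trans_le (Nat.le_self_pow hk0 p))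
  have hpgroup : IsPGroup p (commutator (Borel0 p k)) := fun g =>
    ⟨k + 1, Subtype.ext (pow_pow_succ_eq_one_of_mem_commutator hk0 g.2)⟩
  exact hpgroup.prime_dvd_card_iff hp hq
end

section
/- Let p ≥ 5 be a prime and let j, k ≥ 1 be integers. Let G be a subgroup of GL₂(ℤ/6ʲℤ), and let H be a subgroup of B₀(pᵏ), the subgroup of GL₂(ℤ/pᵏℤ) consisting of matrices whose lower-left entry is divisible by p. If Q is a group admitting a surjective group homomorphism from the commutator subgroup [G, G] and also a surjective group homomorphism from the commutator subgroup [H, H], then Q is the trivial group. -/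
open Matrix

/-! Every element of `GL₂(ℤ/6^(t+1)ℤ)` has order dividing a power of `6`: its `6⁴`-th power
is `≡ 1` modulo `2` and modulo `3` (as `|GL₂(𝔽₂)| = 6` and `|GL₂(𝔽₃)| = 48` divide `6⁴`), hence
modulo `6`, and a matrix `1 + m X` over `ℤ/m^(t+1)ℤ` has `m^t`-th power `1`.
Modulo `p`, the group `B₀(pᵏ)` becomes upper triangular, so `[H, H]` reduces to unipotent
matrices, whose `p`-th power is `1`; therefore every element of `[H, H]` has order dividing `pᵏ`.
A common quotient of two groups whose exponents are coprime is trivial. -/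

open Polynomial in
theorem one_add_natCast_smul_pow_pow_eq_one {R A : Type*} [CommRing R] [Ring A] [Algebra R A]
    {m t : ℕ} (hm : (m : R) ^ (t + 1) = 0) (x : A) : (1 + (m : R) • x) ^ m ^ t = 1 := by
  -- `A` need not be commutative, so the congruence is proved in `R[X]` and evaluated at `x`.
  obtain ⟨q, hq⟩ := dvd_sub_pow_of_dvd_sub (p := m) (a := 1 + (m : R) • (X : R[X])) (b := 1)
    (by simp [smul_eq_C_mul]) t
  have hmA : (m : A) ^ (t + 1) = 0 := by
    rw [← map_natCast (algebraMap R A), ← map_pow, hm, map_zero]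
  have := congrArg (aeval x) hq
  rwa [map_sub, map_pow, map_add, map_one, map_smul, aeval_X, one_pow, map_mul, map_pow,
    map_natCast, hmA, zero_mul, sub_eq_zero, map_one] at this

theorem ZMod.natCast_dvd_of_castHom_eq_zero {m M : ℕ} (h : m ∣ M) {a : ZMod M}
    (ha : ZMod.castHom h (ZMod m) a = 0) : (m : ZMod M) ∣ a := by
  rw [← ZMod.intCast_zmod_cast a, ZMod.castHom_apply, ZMod.cast_intCast h,
    ZMod.intCast_zmod_eq_zero_iff_dvd] at ha
  obtain ⟨b, hb⟩ := ha
  exact ⟨b, by rw [← ZMod.intCast_zmod_cast a, hb]; push_cast; ring⟩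

namespace Matrix.GeneralLinearGroup

variable {n : Type*} [Fintype n] [DecidableEq n]

theorem pow_pow_eq_one_of_natCast_dvd_sub_one {R : Type*} [CommRing R] {m t : ℕ}
    (hm : (m : R) ^ (t + 1) = 0) (u : GL n R)
    (h : ∀ i j, (m : R) ∣ ((u : Matrix n n R) - 1) i j) : u ^ m ^ t = 1 := by
  choose X hX using h
  have hu : (u : Matrix n n R) = 1 + (m : R) • Matrix.of X := by
    ext i j
    simpa [sub_eq_iff_eq_add'] using hX i j
  ext1
  rw [Units.val_pow_eq_pow_val, hu, Units.val_one]
  exact one_add_natCast_smul_pow_pow_eq_one hm _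

theorem natCast_dvd_sub_one_of_map_eq_one {m M : ℕ} (h : m ∣ M) {u : GL n (ZMod M)}
    (hu : map (ZMod.castHom h (ZMod m)) u = 1) (i j : n) :
    (m : ZMod M) ∣ ((u : Matrix n n (ZMod M)) - 1) i j := by
  apply ZMod.natCast_dvd_of_castHom_eq_zero h
  have hij : ZMod.castHom h (ZMod m) ((u : Matrix n n (ZMod M)) i j) =
      (1 : Matrix n n (ZMod m)) i j :=
    congrArg (fun v : GL n (ZMod m) => (v : Matrix n n (ZMod m)) i j) hu
  rw [sub_apply, map_sub, hij, one_apply, one_apply, apply_ite (ZMod.castHom h (ZMod m)),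
    map_one, map_zero, sub_self]

theorem natCast_dvd_sub_one_of_natCard_dvd {q M N : ℕ} (hq : q ∣ M)
    (hN : Nat.card (GL n (ZMod q)) ∣ N) (x : GL n (ZMod M)) (i j : n) :
    (q : ZMod M) ∣ (((x ^ N : GL n (ZMod M)) : Matrix n n (ZMod M)) - 1) i j := by
  refine natCast_dvd_sub_one_of_map_eq_one hq ?_ i j
  rw [map_pow]
  exact orderOf_dvd_iff_pow_eq_one.mp ((orderOf_dvd_natCard _).trans hN)

theorem pow_six_pow_eq_one (t : ℕ) (x : GL (Fin 2) (ZMod (6 ^ (t + 1)))) :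
    x ^ 6 ^ (t + 4) = 1 := by
  have h6 : 6 ∣ 6 ^ (t + 1) := dvd_pow_self 6 t.succ_ne_zero
  have h2 := natCast_dvd_sub_one_of_natCard_dvd (q := 2) ((Dvd.intro 3 rfl).trans h6)
    (N := 6 ^ 4) (by rw [card_GL_field]; simp [Fin.prod_univ_two]) x
  have h3 := natCast_dvd_sub_one_of_natCard_dvd (q := 3) ((Dvd.intro 2 rfl).trans h6)
    (N := 6 ^ 4) (by rw [card_GL_field]; simp [Fin.prod_univ_two]) x
  have hcop : IsCoprime (2 : ZMod (6 ^ (t + 1))) 3 := ⟨-1, 1, by norm_num⟩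
  rw [show 6 ^ (t + 4) = 6 ^ 4 * 6 ^ t by ring, pow_mul]
  refine pow_pow_eq_one_of_natCast_dvd_sub_one ?_ _ fun i j => ?_
  · rw [← Nat.cast_pow, ZMod.natCast_self]
  · simpa [show (6 : ZMod (6 ^ (t + 1))) = 2 * 3 by norm_num] using
      hcop.mul_dvd (h2 i j) (h3 i j)

end Matrix.GeneralLinearGroup

def upperTriangular (R : Type*) [CommRing R] : Subgroup (GL (Fin 2) R) where
  carrier := {A | A 1 0 = 0}
  one_mem' := by simp
  mul_mem' {A B} hA hB := by
    simp_all [mul_apply, Fin.sum_univ_two]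
  inv_mem' {A} hA := by
    simp_all [Matrix.coe_units_inv, inv_def, adjugate_fin_two]

namespace upperTriangular

variable {R : Type*} [CommRing R]

variable (R) in
def diagHom : upperTriangular R →* R × R where
  toFun A := ((A : GL (Fin 2) R) 0 0, (A : GL (Fin 2) R) 1 1)
  map_one' := by simp
  map_mul' A B := by
    have hA : (A : GL (Fin 2) R) 1 0 = 0 := A.2
    have hB : (B : GL (Fin 2) R) 1 0 = 0 := B.2
    simp [mul_apply, Fin.sum_univ_two, hA, hB]

theorem diagHom_eq_one_of_mem_commutator {A : upperTriangular R}
    (hA : A ∈ commutator (upperTriangular R)) : diagHom R A = 1 := by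
  have := Abelianization.commutator_subset_ker (diagHom R).toHomUnits hA
  simpa [Units.ext_iff] using this

theorem pow_char_eq_one_of_mem_commutator (p : ℕ) [Fact p.Prime] [CharP R p]
    {A : upperTriangular R} (hA : A ∈ commutator (upperTriangular R)) :
    (A : GL (Fin 2) R) ^ p = 1 := by
  have hdiag := diagHom_eq_one_of_mem_commutator hA
  simp only [diagHom, MonoidHom.coe_mk, OneHom.coe_mk, Prod.mk_eq_one] at hdiag
  have hA10 : (A : GL (Fin 2) R) 1 0 = 0 := A.2
  set N := ((A : GL (Fin 2) R) : Matrix (Fin 2) (Fin 2) R) - 1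
  have hN : N ^ 2 = 0 := by
    ext i j
    fin_cases i <;> fin_cases j <;> simp [N, sq, mul_apply, Fin.sum_univ_two, hdiag, hA10]
  ext1
  rw [Units.val_pow_eq_pow_val, ← add_sub_cancel 1 ((A : GL (Fin 2) R) : Matrix (Fin 2) (Fin 2) R),
    add_pow_char_of_commute (p := p) (Commute.one_left N), one_pow,
    pow_eq_zero_of_le (Fact.out : p.Prime).two_le hN, add_zero, Units.val_one]

end upperTriangular

theorem borel0_le_comap_upperTriangular (p t : ℕ) :
    Borel0 p (t + 1) ≤ (upperTriangular (ZMod p)).comap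
      (GeneralLinearGroup.map (ZMod.castHom (dvd_pow_self p t.succ_ne_zero) (ZMod p))) := by
  rintro A ⟨c, hc⟩
  change ZMod.castHom (dvd_pow_self p t.succ_ne_zero) (ZMod p)
    ((A : Matrix (Fin 2) (Fin 2) (ZMod (p ^ (t + 1)))) 1 0) = 0
  rw [hc, map_mul, map_natCast, ZMod.natCast_self, zero_mul]

theorem pow_eq_one_of_mem_commutator_of_le_borel0 {p t : ℕ} [Fact p.Prime]
    {H : Subgroup (GL (Fin 2) (ZMod (p ^ (t + 1))))} (hH : H ≤ Borel0 p (t + 1))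
    {y : H} (hy : y ∈ commutator H) : y ^ p ^ (t + 1) = 1 := by
  let red := GeneralLinearGroup.map (n := Fin 2)
    (ZMod.castHom (dvd_pow_self p t.succ_ne_zero) (ZMod p))
  let ρ : H →* upperTriangular (ZMod p) := (red.comp H.subtype).codRestrict _
    fun A => borel0_le_comap_upperTriangular p t (hH A.2)
  have hρy : ρ y ∈ commutator (upperTriangular (ZMod p)) := by
    have := Subgroup.mem_map_of_mem ρ hy
    rw [map_commutator_eq] at this
    exact Subgroup.commutator_mono le_top le_top this
  have hred : red ((y : GL (Fin 2) (ZMod (p ^ (t + 1)))) ^ p) = 1 := by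
    rw [map_pow]
    exact upperTriangular.pow_char_eq_one_of_mem_commutator p hρy
  have hpow := GeneralLinearGroup.pow_pow_eq_one_of_natCast_dvd_sub_one (m := p) (t := t)
    (by rw [← Nat.cast_pow, ZMod.natCast_self]) _
    (GeneralLinearGroup.natCast_dvd_sub_one_of_map_eq_one _ hred)
  rw [← pow_mul, ← pow_succ'] at hpow
  exact Subtype.ext hpow

theorem subsingleton_of_surjective_of_pow_eq_one {A B Q : Type*} [Group A] [Group B] [Group Q]
    {a b : ℕ} (hab : a.Coprime b) (hA : ∀ x : A, x ^ a = 1) (hB : ∀ y : B, y ^ b = 1)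
    {f : A →* Q} {g : B →* Q} (hf : Function.Surjective f) (hg : Function.Surjective g) :
    Subsingleton Q := by
  refine subsingleton_of_forall_eq 1 fun q => ?_
  have hqa : q ^ a = 1 := by
    obtain ⟨x, rfl⟩ := hf q
    rw [← map_pow, hA, map_one]
  have hqb : q ^ b = 1 := by
    obtain ⟨y, rfl⟩ := hg q
    rw [← map_pow, hB, map_one]
  simpa [hab.gcd_eq_one] using pow_gcd_eq_one.mpr ⟨hqa, hqb⟩

/-- Finite-level form of Lemma 5.2: if `p ≥ 5` is prime, `G ≤ GL₂(ℤ/6ʲℤ)` and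
`H ≤ B₀(pᵏ) ≤ GL₂(ℤ/pᵏℤ)`, then any common quotient `Q` of the commutator
subgroups `[G, G]` and `[H, H]` is trivial. -/
theorem subsingleton_of_common_quotient_of_commutators (p j k : ℕ) (hp : p.Prime)
    (hp5 : 5 ≤ p) (hj : 1 ≤ j) (hk : 1 ≤ k)
    (G : Subgroup (GL (Fin 2) (ZMod (6 ^ j))))
    (H : Subgroup (GL (Fin 2) (ZMod (p ^ k)))) (hH : H ≤ Borel0 p k)
    (Q : Type) [Group Q]
    (f : ↥(commutator ↥G) →* Q) (g : ↥(commutator ↥H) →* Q)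
    (hf : Function.Surjective f) (hg : Function.Surjective g) :
    Subsingleton Q := by
  have : Fact p.Prime := ⟨hp⟩
  obtain ⟨t, rfl⟩ := Nat.exists_eq_add_of_le' hj
  obtain ⟨s, rfl⟩ := Nat.exists_eq_add_of_le' hk
  have h6p : Nat.Coprime (2 * 3) p :=
    .mul_left ((Nat.coprime_primes Nat.prime_two hp).mpr (by omega))
      ((Nat.coprime_primes Nat.prime_three hp).mpr (by omega))
  refine subsingleton_of_surjective_of_pow_eq_one (h6p.pow (t + 4) (s + 1))
    (fun x => ?_) (fun y => ?_) hf hg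
  · exact Subtype.ext (Subtype.ext (GeneralLinearGroup.pow_six_pow_eq_one t _))
  · exact Subtype.ext (pow_eq_one_of_mem_commutator_of_le_borel0 hH y.2)
end
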